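/- arXiv:2309.12549 — 3 statements merged into one kernel-verified Lean document; each statement's English description precedes it below -/
import Mathlib

section
/- Let ℓ and k be integers with 1 ≤ ℓ < k, and let m_1, …, m_k be even integers with each m_i ≥ 2 such that m_1 + … + m_ℓ = m_{ℓ+1} + … + m_k. If OP*(m_1, …, m_ℓ) and OP*(m_{ℓ+1}, …, m_k) both have solutions, then OP*(m_1, …, m_k) has a solution. -/
open Equiv Equiv.Perm

section Aux

open Equiv Equiv.Perm

variable {α β : Type*} [Fintype α] [DecidableEq α] [Fintype β] [DecidableEq β]

theorem myCycleType_permCongr (e : α ≃ β) (p : Perm α) :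
    (e.permCongr p).cycleType = p.cycleType := by
  let f : α ≃ {b : β // (fun _ => True) b} :=
    e.trans ⟨fun b => ⟨b, trivial⟩, fun x => x.1, fun _ => rfl, fun _ => rfl⟩
  have : e.permCongr p = p.extendDomain f := by
    ext b
    rw [Equiv.Perm.extendDomain_apply_subtype _ f trivial]
    rfl
  rw [this, cycleType_extendDomain]

theorem myCycleType_sumCongr_left (p : Perm α) :
    (Equiv.Perm.sumCongr p (1 : Perm β)).cycleType = p.cycleType := by
  let f : α ≃ {x : α ⊕ β // x.isLeft = true} :=
    ⟨fun a => ⟨Sum.inl a, rfl⟩, fun x => x.1.getLeft (by simpa using x.2),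
     fun a => rfl, fun x => by
      obtain ⟨x, hx⟩ := x
      cases x with
      | inl a => rfl
      | inr b => simp at hx⟩
  have : Equiv.Perm.sumCongr p (1 : Perm β) = p.extendDomain f := by
    ext x
    cases x with
    | inl a =>
      rw [Equiv.Perm.extendDomain_apply_subtype _ f (by rfl : (Sum.inl a : α ⊕ β).isLeft = true)]
      rfl
    | inr b =>
      rw [Equiv.Perm.extendDomain_apply_not_subtype _ f (by simp)]
      rfl
  rw [this, cycleType_extendDomain]

theorem myCycleType_sumCongr_right (q : Perm β) :
    (Equiv.Perm.sumCongr (1 : Perm α) q).cycleType = q.cycleType := by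
  let f : β ≃ {x : α ⊕ β // x.isRight = true} :=
    ⟨fun b => ⟨Sum.inr b, rfl⟩, fun x => x.1.getRight (by simpa using x.2),
     fun b => rfl, fun x => by
      obtain ⟨x, hx⟩ := x
      cases x with
      | inl a => simp at hx
      | inr b => rfl⟩
  have : Equiv.Perm.sumCongr (1 : Perm α) q = q.extendDomain f := by
    ext x
    cases x with
    | inl a =>
      rw [Equiv.Perm.extendDomain_apply_not_subtype _ f (by simp)]
      rfl
    | inr b =>
      rw [Equiv.Perm.extendDomain_apply_subtype _ f (by rfl : (Sum.inr b : α ⊕ β).isRight = true)]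
      rfl
  rw [this, cycleType_extendDomain]

theorem myCycleType_sumCongr (p : Perm α) (q : Perm β) :
    (Equiv.Perm.sumCongr p q).cycleType = p.cycleType + q.cycleType := by
  have hd : Equiv.Perm.Disjoint (Equiv.Perm.sumCongr p (1 : Perm β))
      (Equiv.Perm.sumCongr (1 : Perm α) q) := by
    intro x
    cases x with
    | inl a => right; rfl
    | inr b => left; rfl
  have : Equiv.Perm.sumCongr p q =
      Equiv.Perm.sumCongr p (1 : Perm β) * Equiv.Perm.sumCongr (1 : Perm α) q := by
    rw [Equiv.Perm.sumCongr_mul, mul_one, one_mul]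
  rw [this, hd.cycleType_mul, myCycleType_sumCongr_left, myCycleType_sumCongr_right]

end Aux



theorem prod_apply_of_fix {α : Type*} (l : List (Perm α)) (v : α) (h : ∀ g ∈ l, g v = v) :
    l.prod v = v := by
  induction l with
  | nil => rfl
  | cons g t ih =>
    rw [List.prod_cons, Perm.mul_apply, ih (fun g hg => h g (List.mem_cons_of_mem _ hg)),
      h g (List.mem_cons_self)]

abbrev OPA (m : List ℕ) : Type := Σ i : Fin m.length, Fin (m.get i)

def OPeps (m : List ℕ) (i : Fin m.length) : Fin (m.get i) ≃ {v : OPA m // v.1 = i} where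
  toFun x := ⟨⟨i, x⟩, rfl⟩
  invFun v := cast (congrArg (fun j => Fin (m.get j)) v.2) v.1.2
  left_inv x := rfl
  right_inv v := by
    obtain ⟨⟨j, x⟩, h⟩ := v
    cases h
    rfl

def OPrho (m : List ℕ) : Perm (OPA m) :=
  Equiv.sigmaCongrRight (fun i => (finRotate (m.get i)))

def OPcyc (m : List ℕ) (i : Fin m.length) : Perm (OPA m) :=
  (finRotate (m.get i)).extendDomain (OPeps m i)

theorem OPcyc_fix (m : List ℕ) (i : Fin m.length) (v : OPA m) (h : v.1 ≠ i) :
    OPcyc m i v = v :=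
  Equiv.Perm.extendDomain_apply_not_subtype _ _ h

theorem OPcyc_apply (m : List ℕ) (j : Fin m.length) (x : Fin (m.get j)) :
    OPcyc m j ⟨j, x⟩ = ⟨j, finRotate _ x⟩ := by
  have h : ((⟨j, x⟩ : OPA m)).1 = j := rfl
  rw [OPcyc, Equiv.Perm.extendDomain_apply_subtype (finRotate (m.get j)) (OPeps m j) h]
  rfl

theorem OPrho_apply (m : List ℕ) (j : Fin m.length) (x : Fin (m.get j)) :
    OPrho m ⟨j, x⟩ = ⟨j, finRotate _ x⟩ := rfl

theorem OPrho_eq_prod (m : List ℕ) :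
    ((List.finRange m.length).map (OPcyc m)).prod = OPrho m := by
  apply Equiv.ext
  intro v
  obtain ⟨j, x⟩ := v
  have hsplit : List.finRange m.length =
      (List.finRange m.length).take j.val ++ j :: (List.finRange m.length).drop (j.val + 1) := by
    conv_lhs => rw [← List.take_append_drop j.val (List.finRange m.length)]
    congr 1
    rw [List.drop_eq_getElem_cons (by simpa using j.isLt)]
    congr 1
    simp
  have hdrop : (List.map (OPcyc m) ((List.finRange m.length).drop (j.val + 1))).prod ⟨j, x⟩
      = ⟨j, x⟩ := by
    apply prod_apply_of_fix
    intro g hg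
    obtain ⟨i, hi, rfl⟩ := List.mem_map.mp hg
    obtain ⟨t, ht, hti⟩ := List.mem_iff_getElem.mp hi
    apply OPcyc_fix
    have hval := congrArg Fin.val hti
    simp at hval
    simp only [ne_eq, Fin.ext_iff]
    omega
  have htake : (List.map (OPcyc m) ((List.finRange m.length).take j.val)).prod
      ⟨j, finRotate _ x⟩ = ⟨j, finRotate _ x⟩ := by
    apply prod_apply_of_fix
    intro g hg
    obtain ⟨i, hi, rfl⟩ := List.mem_map.mp hg
    obtain ⟨t, ht, hti⟩ := List.mem_iff_getElem.mp hi
    apply OPcyc_fix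
    have hval := congrArg Fin.val hti
    simp at hval
    simp only [List.length_take] at ht
    simp only [ne_eq, Fin.ext_iff]
    omega
  rw [hsplit, List.map_append, List.prod_append, List.map_cons, List.prod_cons]
  rw [Perm.mul_apply, Perm.mul_apply, hdrop, OPcyc_apply, htake, OPrho_apply]

theorem OPrho_cycleType (m : List ℕ) (h2 : ∀ x ∈ m, 2 ≤ x) :
    (OPrho m).cycleType = (m : Multiset ℕ) := by
  rw [Equiv.Perm.cycleType_eq ((List.finRange m.length).map (OPcyc m)) (OPrho_eq_prod m) ?_ ?_]
  · have hmap : ((List.finRange m.length).map (OPcyc m)).map (Finset.card ∘ Equiv.Perm.support)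
        = m := by
      rw [List.map_map]
      have hfun : (Finset.card ∘ Equiv.Perm.support) ∘ OPcyc m = m.get := by
        funext i
        have : 2 ≤ m.get i := h2 _ (m.get_mem i)
        simp only [Function.comp_apply, OPcyc, Equiv.Perm.card_support_extend_domain,
          support_finRotate_of_le this, Finset.card_univ, Fintype.card_fin]
      rw [hfun, List.map_get_finRange]
    rw [hmap]
  · intro g hg
    obtain ⟨i, _, rfl⟩ := List.mem_map.mp hg
    exact (isCycle_finRotate_of_le (h2 _ (m.get_mem i))).extendDomain _
  · rw [List.pairwise_map]
    refine List.Pairwise.imp_of_mem ?_ (List.nodup_finRange m.length)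
    intro i i' _ _ hne v
    by_cases hv : v.1 = i
    · right
      exact OPcyc_fix m i' v (by rw [hv]; exact hne)
    · left
      exact OPcyc_fix m i v hv

theorem finRotate_parity {c : ℕ} (hc2 : 2 ≤ c) (hce : Even c) (x : Fin c) :
    ((finRotate c x).val % 2 = 0) ↔ ¬(x.val % 2 = 0) := by
  obtain ⟨t, rfl⟩ : ∃ t, c = t + 1 := ⟨c - 1, by omega⟩
  rw [coe_finRotate]
  obtain ⟨u, hu⟩ := hce
  by_cases h : x = Fin.last t
  · subst h
    rw [if_pos rfl]
    have hl : (Fin.last t).val = t := rfl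
    rw [hl]
    constructor
    · intro _
      omega
    · intro _
      omega
  · rw [if_neg h]
    constructor
    · intro h1 h2
      omega
    · intro h1
      omega

def OPcolor (m : List ℕ) : OPA m → Bool := fun v => decide (v.2.val % 2 = 0)

theorem OPcolor_flip (m : List ℕ) (h2 : ∀ x ∈ m, 2 ≤ x) (heven : ∀ x ∈ m, Even x)
    (v : OPA m) : OPcolor m (OPrho m v) = !OPcolor m v := by
  obtain ⟨i, x⟩ := v
  rw [OPrho_apply]
  show decide ((finRotate (m.get i) x).val % 2 = 0) = !decide (x.val % 2 = 0)
  rw [← decide_not]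
  exact decide_eq_decide.mpr
    (finRotate_parity (h2 _ (m.get_mem i)) (heven _ (m.get_mem i)) x)

theorem myCycleType_permCongr' {α β : Type*} [Fintype α] [DecidableEq α] [Fintype β]
    [DecidableEq β] (e : α ≃ β) (p : Perm α) :
    (e.permCongr p).cycleType = p.cycleType := by
  let f : α ≃ {b : β // (fun _ => True) b} :=
    e.trans ⟨fun b => ⟨b, trivial⟩, fun x => x.1, fun _ => rfl, fun _ => rfl⟩
  have : e.permCongr p = p.extendDomain f := by
    ext b
    rw [Equiv.Perm.extendDomain_apply_subtype _ f trivial]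
    rfl
  rw [this, Equiv.Perm.cycleType_extendDomain]

theorem exists_bipartite_perm (m : List ℕ) (h2 : ∀ x ∈ m, 2 ≤ x) (heven : ∀ x ∈ m, Even x)
    (s : ℕ) (hs : m.sum = s + s) :
    ∃ ρ : Perm (Fin s ⊕ Fin s), ρ.cycleType = (m : Multiset ℕ) ∧
      (∀ a, ∃ b, ρ (Sum.inl a) = Sum.inr b) ∧ (∀ b, ∃ a, ρ (Sum.inr b) = Sum.inl a) := by
  classical
  let P : OPA m → Prop := fun v => OPcolor m v = true
  have hflip := OPcolor_flip m h2 heven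
  have hPiff : ∀ v, ¬ P v ↔ OPcolor m v = false := by
    intro v
    simp [P, Bool.not_eq_true]
  have hPtransfer : ∀ v, P v → ¬ P (OPrho m v) := by
    intro v hv
    rw [hPiff, hflip, hv]
    rfl
  have hPtransfer' : ∀ v, ¬ P v → P ((OPrho m)⁻¹ v) := by
    intro v hv
    have := hflip ((OPrho m)⁻¹ v)
    rw [← Equiv.Perm.mul_apply, mul_inv_cancel, Equiv.Perm.one_apply] at this
    rw [hPiff] at hv
    rw [hv] at this
    show OPcolor m _ = true
    cases hcc : OPcolor m ((OPrho m)⁻¹ v) with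
    | true => rfl
    | false => rw [hcc] at this; exact absurd this (by simp)
  have hcardA : Fintype.card (OPA m) = s + s := by
    rw [Fintype.card_sigma]
    simp only [Fintype.card_fin]
    have : ∑ i : Fin m.length, m.get i = m.sum := by
      simpa using Fin.sum_univ_get m
    rw [this, hs]
  have hTF : Fintype.card {v : OPA m // P v} = Fintype.card {v : OPA m // ¬ P v} := by
    apply Fintype.card_congr
    refine ⟨fun v => ⟨OPrho m v.1, hPtransfer v.1 v.2⟩,
      fun v => ⟨(OPrho m)⁻¹ v.1, hPtransfer' v.1 v.2⟩, ?_, ?_⟩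
    · intro v; apply Subtype.ext; simp
    · intro v; apply Subtype.ext; simp
  have hsplitcard := Fintype.card_subtype_compl P (α := OPA m)
  have hcT : Fintype.card {v : OPA m // P v} = s := by omega
  have hcF : Fintype.card {v : OPA m // ¬ P v} = s := by omega
  let eT : {v : OPA m // P v} ≃ Fin s := Fintype.equivFinOfCardEq hcT
  let eF : {v : OPA m // ¬ P v} ≃ Fin s := Fintype.equivFinOfCardEq hcF
  let E : OPA m ≃ Fin s ⊕ Fin s := (Equiv.sumCompl P).symm.trans (Equiv.sumCongr eT eF)
  refine ⟨E.permCongr (OPrho m), ?_, ?_, ?_⟩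
  · rw [myCycleType_permCongr' E (OPrho m)]
    exact OPrho_cycleType m h2
  · intro a
    have h1 : E.symm (Sum.inl a) = ((eT.symm a : {v : OPA m // P v}) : OPA m) := by
      simp [E]
    have h2' : ¬ P (OPrho m ((eT.symm a : {v : OPA m // P v}) : OPA m)) :=
      hPtransfer _ (eT.symm a).2
    refine ⟨eF ⟨_, h2'⟩, ?_⟩
    rw [Equiv.permCongr_apply, h1]
    show E _ = _
    rw [show E = (Equiv.sumCompl P).symm.trans (Equiv.sumCongr eT eF) from rfl]
    rw [Equiv.trans_apply, Equiv.sumCompl_symm_apply_of_neg h2']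
    rfl
  · intro b
    have h1 : E.symm (Sum.inr b) = ((eF.symm b : {v : OPA m // ¬ P v}) : OPA m) := by
      simp [E]
    have h2' : P ((OPrho m) ((eF.symm b : {v : OPA m // ¬ P v}) : OPA m)) := by
      have hv := (hPiff _).mp (eF.symm b).2
      show OPcolor m _ = true
      rw [hflip, hv]
      rfl
    refine ⟨eT ⟨_, h2'⟩, ?_⟩
    rw [Equiv.permCongr_apply, h1]
    show E _ = _
    rw [show E = (Equiv.sumCompl P).symm.trans (Equiv.sumCongr eT eF) from rfl]
    rw [Equiv.trans_apply, Equiv.sumCompl_symm_apply_of_pos h2']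
    rfl


/-- A solution to the directed Oberwolfach problem OP*(m₁, …, m_k), where `m` is the list of
cycle lengths: a family of `n − 1` permutations of `Fin n` (with `n = m.sum`), each with cycle
type equal to the multiset of entries of `m`, such that for every ordered pair of distinct
vertices `(x, y)` there is exactly one member of the family sending `x` to `y`. -/
def HasOPSolution (m : List ℕ) : Prop :=
  ∃ σ : Fin (m.sum - 1) → Equiv.Perm (Fin m.sum),
    (∀ i, (σ i).cycleType = (m : Multiset ℕ)) ∧
    ∀ x y : Fin m.sum, x ≠ y → ∃! i, σ i x = y

theorem transportOP (l : List ℕ) (t : ℕ) (h : l.sum = t) (hs : HasOPSolution l) :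
    ∃ σ : Fin (t - 1) → Perm (Fin t), (∀ i, (σ i).cycleType = (l : Multiset ℕ)) ∧
      ∀ x y : Fin t, x ≠ y → ∃! i, σ i x = y := by
  subst h; exact hs


/-- Theorem 4 (bipartite recursive construction): if all cycle lengths are even and the first
`ℓ` lengths have the same sum as the remaining ones, then solutions to the two subproblems
combine to a solution of the whole problem. -/
theorem stmt0 (ℓ k : ℕ) (hℓ : 1 ≤ ℓ) (hk : ℓ < k) (m : List ℕ)
    (hlen : m.length = k)
    (h2 : ∀ x ∈ m, 2 ≤ x) (heven : ∀ x ∈ m, Even x)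
    (hsum : (m.take ℓ).sum = (m.drop ℓ).sum)
    (hsol₁ : HasOPSolution (m.take ℓ)) (hsol₂ : HasOPSolution (m.drop ℓ)) :
    HasOPSolution m := by
  classical
  set s := (m.take ℓ).sum with hsdef
  have hdrop : (m.drop ℓ).sum = s := hsum.symm
  have hmsum : m.sum = s + s := by
    conv_lhs => rw [← List.take_append_drop ℓ m]
    rw [List.sum_append, hdrop, hsdef]
  have hs2 : 2 ≤ s := by
    have hne : m.take ℓ ≠ [] := by
      intro h
      have := congrArg List.length h
      simp only [List.length_take, List.length_nil, hlen] at this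
      omega
    obtain ⟨a, t, hat⟩ := List.exists_cons_of_ne_nil hne
    have ha : a ∈ m.take ℓ := by rw [hat]; exact List.mem_cons_self
    have h2a := h2 a (List.mem_of_mem_take ha)
    have : s = a + t.sum := by rw [hsdef, hat]; rfl
    omega
  haveI : NeZero s := ⟨by omega⟩
  obtain ⟨σ₁, hct₁, hcov₁⟩ := transportOP _ s hsdef.symm hsol₁
  obtain ⟨σ₂, hct₂, hcov₂⟩ := transportOP _ s hdrop hsol₂
  obtain ⟨ρ, hρct, hρl, hρr⟩ := exists_bipartite_perm m h2 heven s hmsum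
  choose f hf using hρl
  choose g hg using hρr
  have hginj : Function.Injective g := by
    intro b b' hbb
    have hr : ρ (Sum.inr b) = ρ (Sum.inr b') := by rw [hg b, hg b', hbb]
    exact Sum.inr_injective (ρ.injective hr)
  let gE : Fin s ≃ Fin s := Equiv.ofBijective g
    ⟨hginj, Finite.surjective_of_injective hginj⟩
  have hgE : ∀ x, gE x = g x := fun _ => rfl
  -- the two families of permutations on Fin s ⊕ Fin s
  let trn : Fin s → Perm (Fin s ⊕ Fin s) := fun j =>
    Equiv.Perm.sumCongr (1 : Perm (Fin s)) (Equiv.addRight j)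
  let Q : Fin s → Perm (Fin s ⊕ Fin s) := fun j => trn j * ρ * (trn j)⁻¹
  let Pp : Fin (s - 1) → Perm (Fin s ⊕ Fin s) := fun i => Equiv.Perm.sumCongr (σ₁ i) (σ₂ i)
  have htrn_inv_l : ∀ j a, (trn j)⁻¹ (Sum.inl a) = Sum.inl a := by
    intro j a
    rw [show (trn j)⁻¹ = Equiv.Perm.sumCongr (1 : Perm (Fin s))⁻¹ ((Equiv.addRight j) : Perm (Fin s))⁻¹
      from Equiv.Perm.sumCongr_inv _ _]
    rfl
  have htrn_inv_r : ∀ j b, (trn j)⁻¹ (Sum.inr b) = Sum.inr (b - j) := by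
    intro j b
    rw [show (trn j)⁻¹ = Equiv.Perm.sumCongr (1 : Perm (Fin s))⁻¹ ((Equiv.addRight j) : Perm (Fin s))⁻¹
      from Equiv.Perm.sumCongr_inv _ _]
    show Sum.inr (((Equiv.addRight j) : Perm (Fin s))⁻¹ b) = Sum.inr (b - j)
    congr 1
    show (Equiv.addRight j).symm b = b - j
    rw [Equiv.addRight_symm]
    show b + -j = b - j
    abel
  have hQl : ∀ j a, Q j (Sum.inl a) = Sum.inr (f a + j) := by
    intro j a
    show (trn j) (ρ ((trn j)⁻¹ (Sum.inl a))) = _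
    rw [htrn_inv_l, hf a]
    rfl
  have hQr : ∀ j b, Q j (Sum.inr b) = Sum.inl (g (b - j)) := by
    intro j b
    show (trn j) (ρ ((trn j)⁻¹ (Sum.inr b))) = _
    rw [htrn_inv_r, hg]
    rfl
  have hPl : ∀ i a, Pp i (Sum.inl a) = Sum.inl (σ₁ i a) := fun i a => rfl
  have hPr : ∀ i b, Pp i (Sum.inr b) = Sum.inr (σ₂ i b) := fun i b => rfl
  -- cycle types
  have hQct : ∀ j, (Q j).cycleType = (m : Multiset ℕ) := by
    intro j
    rw [show Q j = trn j * ρ * (trn j)⁻¹ from rfl, Equiv.Perm.cycleType_conj, hρct]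
  have hPct : ∀ i, (Pp i).cycleType = (m : Multiset ℕ) := by
    intro i
    rw [show Pp i = Equiv.Perm.sumCongr (σ₁ i) (σ₂ i) from rfl, myCycleType_sumCongr,
      hct₁, hct₂]
    have hc := congrArg (fun l : List ℕ => (l : Multiset ℕ)) (List.take_append_drop ℓ m)
    rw [← hc]
    simp
  -- assemble
  have hidx : m.sum - 1 = (s - 1) + s := by omega
  let e : Fin m.sum ≃ Fin s ⊕ Fin s := (finCongr hmsum).trans finSumFinEquiv.symm
  let idx : Fin (m.sum - 1) ≃ Fin (s - 1) ⊕ Fin s := (finCongr hidx).trans finSumFinEquiv.symm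
  let F : Fin (s - 1) ⊕ Fin s → Perm (Fin s ⊕ Fin s) := Sum.elim Pp Q
  refine ⟨fun i => (e.symm.permCongr) (F (idx i)), ?_, ?_⟩
  · intro i
    rw [myCycleType_permCongr']
    cases hidxi : idx i with
    | inl a => exact hPct a
    | inr j => exact hQct j
  · intro x y hxy
    have hne : e x ≠ e y := fun h => hxy (e.injective h)
    have key : ∃! u : Fin (s - 1) ⊕ Fin s, F u (e x) = e y := by
      cases hex : e x with
      | inl a =>
        cases hey : e y with
        | inl b =>
          have hab : a ≠ b := by rw [hex, hey] at hne; exact fun h => hne (by rw [h])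
          obtain ⟨i0, hi0, hiu⟩ := hcov₁ a b hab
          refine ⟨Sum.inl i0, ?_, ?_⟩
          · show Pp i0 (Sum.inl a) = Sum.inl b
            rw [hPl, hi0]
          · intro u hu
            cases u with
            | inl i =>
              have : σ₁ i a = b := Sum.inl_injective (by rw [← hPl i a]; exact hu)
              exact congrArg Sum.inl (hiu i this)
            | inr j =>
              have h1 : F (Sum.inr j) (Sum.inl a) = Sum.inr (f a + j) := hQl j a
              rw [hu] at h1
              simp at h1
        | inr b =>
          refine ⟨Sum.inr (b - f a), ?_, ?_⟩
          · show Q (b - f a) (Sum.inl a) = Sum.inr b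
            rw [hQl]
            congr 1
            abel
          · intro u hu
            cases u with
            | inl i =>
              have h1 : F (Sum.inl i) (Sum.inl a) = Sum.inl ((σ₁ i) a) := hPl i a
              rw [hu] at h1
              simp at h1
            | inr j =>
              have : f a + j = b := Sum.inr_injective (by rw [← hQl j a]; exact hu)
              refine congrArg Sum.inr ?_
              rw [← this]
              abel
      | inr a =>
        cases hey : e y with
        | inl b =>
          refine ⟨Sum.inr (a - gE.symm b), ?_, ?_⟩
          · show Q (a - gE.symm b) (Sum.inr a) = Sum.inl b
            rw [hQr]
            congr 1
            rw [show a - (a - gE.symm b) = gE.symm b by abel, ← hgE, Equiv.apply_symm_apply]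
          · intro u hu
            cases u with
            | inl i =>
              have h1 : F (Sum.inl i) (Sum.inr a) = Sum.inr ((σ₂ i) a) := hPr i a
              rw [hu] at h1
              simp at h1
            | inr j =>
              have h1 : g (a - j) = b := Sum.inl_injective (by rw [← hQr j a]; exact hu)
              have h2' : g (a - j) = g (gE.symm b) := by
                rw [h1, ← hgE, Equiv.apply_symm_apply]
              have h3 : a - j = gE.symm b := hginj h2'
              refine congrArg Sum.inr ?_
              rw [← h3]
              abel
        | inr b =>
          have hab : a ≠ b := by rw [hex, hey] at hne; exact fun h => hne (by rw [h])
          obtain ⟨i0, hi0, hiu⟩ := hcov₂ a b hab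
          refine ⟨Sum.inl i0, ?_, ?_⟩
          · show Pp i0 (Sum.inr a) = Sum.inr b
            rw [hPr, hi0]
          · intro u hu
            cases u with
            | inl i =>
              have : σ₂ i a = b := Sum.inr_injective (by rw [← hPr i a]; exact hu)
              exact congrArg Sum.inl (hiu i this)
            | inr j =>
              have h1 : F (Sum.inr j) (Sum.inr a) = Sum.inl (g (a - j)) := hQr j a
              rw [hu] at h1
              simp at h1
    obtain ⟨u, hu, huniq⟩ := key
    refine ⟨idx.symm u, ?_, ?_⟩
    · show (e.symm.permCongr (F (idx (idx.symm u)))) x = y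
      rw [Equiv.apply_symm_apply, Equiv.permCongr_apply, Equiv.symm_symm, hu,
        Equiv.symm_apply_apply]
    · intro i hi
      have hFi : F (idx i) (e x) = e y := by
        have hi' : e.symm (F (idx i) (e x)) = y := by
          rw [← hi, Equiv.permCongr_apply, Equiv.symm_symm]
        rw [← hi', Equiv.apply_symm_apply]
      have := huniq (idx i) hFi
      rw [← this, Equiv.symm_apply_apply]
end

section
/- Let 2 ≤ m_1 ≤ m_2 ≤ … ≤ m_k be integers with n = m_1 + … + m_k ≤ 13. Then OP*(m_1, …, m_k) has a solution if and only if the tuple (m_1, …, m_k) is not one of (4), (6), (3, 3). -/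
/-- permutation from a list of cycles -/
def pc (n : ℕ) (c : List (List (Fin n))) : Equiv.Perm (Fin n) :=
  (c.map List.formPerm).prod

lemma cycleType_pc {n : ℕ} (c : List (List (Fin n)))
    (h1 : ∀ l ∈ c, l.Nodup) (h2 : ∀ l ∈ c, 2 ≤ l.length)
    (h3 : c.Pairwise (fun l1 l2 => ∀ a ∈ l1, a ∉ l2)) :
    (pc n c).cycleType = (c.map List.length : Multiset ℕ) := by
  induction c with
  | nil => simp [pc, Equiv.Perm.cycleType_one]
  | cons l c ih =>
    have hd : (List.formPerm l).Disjoint (pc n c) := by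
      apply Equiv.Perm.disjoint_prod_right
      intro g hg
      simp only [List.mem_map] at hg
      obtain ⟨l', hl', rfl⟩ := hg
      rw [Equiv.Perm.disjoint_iff_disjoint_support]
      apply Finset.disjoint_of_subset_left (List.support_formPerm_le l)
      apply Finset.disjoint_of_subset_right (List.support_formPerm_le l')
      rw [Finset.disjoint_left]
      intro a ha ha'
      simp only [List.mem_toFinset] at ha ha'
      exact (List.rel_of_pairwise_cons h3 hl') a ha ha'
    have : pc n (l :: c) = List.formPerm l * pc n c := by
      simp [pc]
    rw [this, Equiv.Perm.Disjoint.cycleType_mul hd, ih (fun l hl => h1 l (List.mem_cons_of_mem _ hl))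
      (fun l hl => h2 l (List.mem_cons_of_mem _ hl)) (List.Pairwise.of_cons h3)]
    have hcyc : (List.formPerm l).IsCycle :=
      List.isCycle_formPerm (h1 l (List.mem_cons_self)) (h2 l (List.mem_cons_self))
    rw [hcyc.cycleType]
    have hsupp : (List.formPerm l).support = l.toFinset :=
      List.support_formPerm_of_nodup l (h1 l (List.mem_cons_self)) (by
        intro x hx
        subst hx
        have := h2 [x] (List.mem_cons_self)
        simp at this)
    rw [hsupp, List.toFinset_card_of_nodup (h1 l (List.mem_cons_self))]
    simp

lemma hasOP_of_data (m : List ℕ) {n : ℕ} (D : List (List (List (Fin n))))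
    (hD : D.length = m.sum - 1)
    (hcyc : ∀ c ∈ D, ((∀ l ∈ c, l.Nodup) ∧ (∀ l ∈ c, 2 ≤ l.length) ∧
        c.Pairwise (fun l1 l2 => ∀ a ∈ l1, a ∉ l2)) ∧
        (c.map List.length : Multiset ℕ) = (m : Multiset ℕ))
    (hdisj : D.Pairwise (fun c1 c2 => ∀ x, pc n c1 x ≠ pc n c2 x))
    (hn : m.sum = n := by rfl) :
    HasOPSolution m := by
  subst hn
  have hct : ∀ c ∈ D, (pc m.sum c).cycleType = (m : Multiset ℕ) := by
    intro c hc
    obtain ⟨⟨a, b, d⟩, e⟩ := hcyc c hc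
    rw [cycleType_pc c a b d, e]
  have hfpf : ∀ c ∈ D, ∀ x, pc m.sum c x ≠ x := by
    intro c hc x
    have h1 : (pc m.sum c).cycleType.sum = (m : Multiset ℕ).sum := by rw [hct c hc]
    rw [Equiv.Perm.sum_cycleType] at h1
    have h2 : (m : Multiset ℕ).sum = m.sum := by simp
    have h3 : (pc m.sum c).support = Finset.univ :=
      Finset.eq_univ_of_card _ (by rw [h1, h2]; simp)
    have : x ∈ (pc m.sum c).support := h3 ▸ Finset.mem_univ x
    exact Equiv.Perm.mem_support.mp this
  refine ⟨fun i => pc m.sum (D.get (Fin.cast hD.symm i)), ?_, ?_⟩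
  · intro i; exact hct _ (D.get_mem _)
  · intro x y hxy
    -- the list of images
    set xs : List (Fin m.sum) := D.map (fun c => pc m.sum c x) with hxs
    have hlen : xs.length = m.sum - 1 := by rw [hxs, List.length_map, hD]
    have hnd : xs.Nodup := by
      rw [hxs]
      exact List.Pairwise.map _ (fun c1 c2 h => h x) hdisj
    have hsub : xs.toFinset ⊆ Finset.univ.erase x := by
      intro a ha
      simp only [List.mem_toFinset, hxs, List.mem_map] at ha
      obtain ⟨c, hc, rfl⟩ := ha
      exact Finset.mem_erase.mpr ⟨hfpf c hc x, Finset.mem_univ _⟩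
    have hcard : (Finset.univ.erase x).card ≤ xs.toFinset.card := by
      rw [List.toFinset_card_of_nodup hnd, hlen, Finset.card_erase_of_mem (Finset.mem_univ x)]
      simp
    have heq : xs.toFinset = Finset.univ.erase x :=
      Finset.eq_of_subset_of_card_le hsub hcard
    have hy : y ∈ xs := by
      rw [← List.mem_toFinset, heq]
      exact Finset.mem_erase.mpr ⟨Ne.symm hxy, Finset.mem_univ _⟩
    obtain ⟨i, hi⟩ := List.get_of_mem hy
    have hilt : (i : ℕ) < m.sum - 1 := hlen ▸ i.isLt
    have key : ∀ k : Fin (m.sum - 1), (pc m.sum (D.get (Fin.cast hD.symm k))) x = xs.get ⟨k, by rw [hlen]; exact k.isLt⟩ := by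
      intro k
      simp only [hxs, List.get_eq_getElem, List.getElem_map]
      rfl
    refine ⟨⟨i, hilt⟩, ?_, ?_⟩
    · show (pc m.sum (D.get (Fin.cast hD.symm ⟨i, hilt⟩))) x = y
      rw [key ⟨i, hilt⟩]
      convert hi using 2
    · intro k hk
      have hk' : xs.get ⟨k, by rw [hlen]; exact k.isLt⟩ = y := by
        rw [← key k]; exact hk
      have hgi : xs.get ⟨k, by rw [hlen]; exact k.isLt⟩ = xs.get i := by rw [hk', hi]
      have := (List.Nodup.get_inj_iff hnd).mp hgi
      apply Fin.ext
      simpa using congrArg Fin.val this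

def ap {n : ℕ} (l : List (Fin n)) (i : Fin n) : Fin n := l.getD i.val i

def listOf {n : ℕ} (σ : Equiv.Perm (Fin n)) : List (Fin n) := (List.finRange n).map σ

lemma ap_listOf {n : ℕ} (σ : Equiv.Perm (Fin n)) (i : Fin n) : ap (listOf σ) i = σ i := by
  have h : (i : ℕ) < (listOf σ).length := by simp [listOf]
  rw [ap, List.getD_eq_getElem _ _ h]
  simp [listOf, List.getElem_map, List.getElem_finRange]

lemma listOf_mem_permutations {n : ℕ} (σ : Equiv.Perm (Fin n)) :
    listOf σ ∈ (List.finRange n).permutations' := by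
  rw [List.mem_permutations']
  apply List.perm_of_nodup_nodup_toFinset_eq
  · exact (List.nodup_finRange n).map σ.injective
  · exact List.nodup_finRange n
  · ext a
    simp only [List.mem_toFinset, listOf, List.mem_map, List.mem_finRange, true_and]
    constructor
    · intro; trivial
    · intro; exact ⟨σ⁻¹ a, by simp⟩

def Dl {n : ℕ} (l1 l2 : List (Fin n)) : Prop := ∀ i : Fin n, ap l1 i ≠ ap l2 i

instance {n : ℕ} (l1 l2 : List (Fin n)) : Decidable (Dl l1 l2) := by
  unfold Dl; infer_instance

/-- fixed-point-free from full cycle type -/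
lemma fpf_of_cycleType {n : ℕ} (σ : Equiv.Perm (Fin n)) (m : List ℕ)
    (h : σ.cycleType = (m : Multiset ℕ)) (hs : m.sum = n) (x : Fin n) : σ x ≠ x := by
  have h1 : σ.cycleType.sum = n := by rw [h]; simp [hs]
  rw [Equiv.Perm.sum_cycleType] at h1
  have h3 : σ.support = Finset.univ := Finset.eq_univ_of_card _ (by rw [h1]; simp)
  exact Equiv.Perm.mem_support.mp (h3 ▸ Finset.mem_univ x)

lemma exists_pow_ne {n : ℕ} (σ : Equiv.Perm (Fin n)) (k : ℕ) (h : σ ^ k ≠ 1) :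
    ∃ x, (σ ^ k) x ≠ x := by
  by_contra hc
  push_neg at hc
  exact h (Equiv.ext hc)

/-- From a solution get conjugated family with prescribed first permutation. -/
lemma conj_solution (m : List ℕ) (c0 : Equiv.Perm (Fin m.sum))
    (hc0 : c0.cycleType = (m : Multiset ℕ)) (h : HasOPSolution m) (i0 : Fin (m.sum - 1)) :
    ∃ τ : Fin (m.sum - 1) → Equiv.Perm (Fin m.sum),
      τ i0 = c0 ∧ (∀ i, (τ i).cycleType = (m : Multiset ℕ)) ∧
      ∀ x y : Fin m.sum, x ≠ y → ∃! i, τ i x = y := by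
  obtain ⟨σ, hct, hcov⟩ := h
  have hconj : IsConj (σ i0) c0 := Equiv.Perm.isConj_iff_cycleType_eq.mpr (by rw [hct, hc0])
  obtain ⟨g, hg⟩ := hconj
  set u : Equiv.Perm (Fin m.sum) := (g : Equiv.Perm (Fin m.sum)) with hu_def
  have hg' : u * σ i0 * u⁻¹ = c0 := by
    have := hg.eq
    rw [show ((g : Equiv.Perm (Fin m.sum)) * σ i0 = c0 * g) from this]
    simp [mul_assoc, hu_def]
  refine ⟨fun i => u * σ i * u⁻¹, hg', fun i => ?_, fun x y hxy => ?_⟩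
  · show (u * σ i * u⁻¹).cycleType = _
    rw [Equiv.Perm.cycleType_conj, hct]
  · have hxy' : u⁻¹ x ≠ u⁻¹ y := fun hc => hxy (u⁻¹.injective hc)
    obtain ⟨i, hi, hu⟩ := hcov (u⁻¹ x) (u⁻¹ y) hxy'
    have key : ∀ j, (u * σ j * u⁻¹) x = y ↔ σ j (u⁻¹ x) = u⁻¹ y := by
      intro j
      simp only [Equiv.Perm.mul_apply]
      constructor
      · intro hh; rw [← hh]; simp
      · intro hh; rw [hh]; simp
    exact ⟨i, (key i).mpr hi, fun j hj => hu j ((key j).mp hj)⟩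

/-- arc-disjointness of distinct members -/
lemma arc_disjoint {m : List ℕ} {τ : Fin (m.sum - 1) → Equiv.Perm (Fin m.sum)}
    (hct : ∀ i, (τ i).cycleType = (m : Multiset ℕ))
    (hcov : ∀ x y : Fin m.sum, x ≠ y → ∃! i, τ i x = y)
    {i j : Fin (m.sum - 1)} (hij : i ≠ j) (x : Fin m.sum) : τ i x ≠ τ j x := by
  intro hc
  have hfpf : τ i x ≠ x := fpf_of_cycleType (τ i) m (hct i) rfl x
  obtain ⟨k, hk, hu⟩ := hcov x (τ i x) (Ne.symm hfpf)
  exact hij ((hu i rfl).trans (hu j hc.symm).symm)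

lemma orderOf_eq_of_cycleType {n : ℕ} (σ : Equiv.Perm (Fin n)) (m : List ℕ)
    (h : σ.cycleType = (m : Multiset ℕ)) : orderOf σ = (m : Multiset ℕ).lcm := by
  rw [← Equiv.Perm.lcm_cycleType, h]

lemma perm_pow2_apply {n : ℕ} (σ : Equiv.Perm (Fin n)) (y : Fin n) :
    (σ ^ 2) y = σ (σ y) := by rw [pow_two]; rfl

lemma perm_pow3_apply {n : ℕ} (σ : Equiv.Perm (Fin n)) (y : Fin n) :
    (σ ^ 3) y = σ (σ (σ y)) := by
  have h : σ ^ 3 = σ ^ 2 * σ := by rw [show (3 : ℕ) = 2 + 1 from rfl, pow_succ]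
  rw [h, Equiv.Perm.mul_apply, perm_pow2_apply]

lemma perm_pow4_apply {n : ℕ} (σ : Equiv.Perm (Fin n)) (y : Fin n) :
    (σ ^ 4) y = σ (σ (σ (σ y))) := by
  have h : σ ^ 4 = σ ^ 3 * σ := by rw [show (4 : ℕ) = 3 + 1 from rfl, pow_succ]
  rw [h, Equiv.Perm.mul_apply, perm_pow3_apply]

-- ### the case [4]
def c4 : Equiv.Perm (Fin 4) := pc 4 [[0, 1, 2, 3]]

lemma c4_cycleType : c4.cycleType = ([4] : List ℕ) := by
  rw [c4, cycleType_pc _ (by decide) (by decide) (by decide)]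
  rfl

def P4 (l : List (Fin 4)) : Prop :=
  (∀ i : Fin 4, ap l i ≠ i ∧ ap l i ≠ c4 i) ∧ (∃ i : Fin 4, ap l (ap l i) ≠ i)

instance : DecidablePred P4 := fun l => by unfold P4; infer_instance

def cand4 : List (List (Fin 4)) := (List.finRange 4).permutations'.filter (fun l => decide (P4 l))

lemma core4 : ¬ ∃ l1 ∈ cand4, ∃ l2 ∈ cand4, Dl l1 l2 := by decide

lemma no4 : ¬ HasOPSolution [4] := by
  intro h
  obtain ⟨τ, hτ0, hct, hcov⟩ := conj_solution [4] c4 c4_cycleType h (0 : Fin 3)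
  change Fin 3 → Equiv.Perm (Fin 4) at τ
  have hfpf : ∀ i x, τ i x ≠ x := fun i x => fpf_of_cycleType (τ i) [4] (hct i) rfl x
  have hdisj : ∀ (i j : Fin 3), i ≠ j → ∀ x, τ i x ≠ τ j x :=
    fun i j hij x => arc_disjoint hct hcov hij x
  have horder : ∀ i, orderOf (τ i) = 4 := by
    intro i
    rw [orderOf_eq_of_cycleType (τ i) [4] (hct i)]
    rfl
  have hP : ∀ i : Fin 3, i ≠ 0 → P4 (listOf (τ i)) := by
    intro i hi
    constructor
    · intro x
      rw [ap_listOf]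
      exact ⟨hfpf i x, by rw [← hτ0]; exact hdisj i (0 : Fin 3) hi x⟩
    · have hp2 : τ i ^ 2 ≠ 1 := by
        intro hc
        have := orderOf_dvd_of_pow_eq_one hc
        rw [horder i] at this
        exact absurd this (by decide)
      obtain ⟨x, hx⟩ := exists_pow_ne (τ i) 2 hp2
      refine ⟨x, ?_⟩
      rw [ap_listOf, ap_listOf]
      rw [perm_pow2_apply] at hx
      exact hx
  have hmem : ∀ i : Fin 3, i ≠ 0 → listOf (τ i) ∈ cand4 := by
    intro i hi
    rw [cand4, List.mem_filter]
    exact ⟨listOf_mem_permutations _, decide_eq_true (hP i hi)⟩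
  apply core4
  refine ⟨listOf (τ (1 : Fin 3)), hmem 1 (by decide), listOf (τ (2 : Fin 3)), hmem 2 (by decide), ?_⟩
  intro x
  rw [ap_listOf, ap_listOf]
  exact hdisj (1 : Fin 3) (2 : Fin 3) (by decide) x


-- ### the case [3,3]
def c33 : Equiv.Perm (Fin 6) := pc 6 [[0, 1, 2], [3, 4, 5]]

lemma c33_cycleType : c33.cycleType = ([3, 3] : List ℕ) := by
  rw [c33, cycleType_pc _ (by decide) (by decide) (by decide)]
  rfl

def P33 (l : List (Fin 6)) : Prop :=
  (∀ i : Fin 6, ap l i ≠ i ∧ ap l i ≠ c33 i) ∧ (∀ i : Fin 6, ap l (ap l (ap l i)) = i)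

instance : DecidablePred P33 := fun l => by unfold P33; infer_instance

def cand33 : List (List (Fin 6)) :=
  (List.finRange 6).permutations'.filter (fun l => decide (P33 l))

lemma core33 : ¬ ∃ l1 ∈ cand33, ∃ l2 ∈ cand33, Dl l1 l2 ∧ ∃ l3 ∈ cand33,
    Dl l1 l3 ∧ Dl l2 l3 ∧ ∃ l4 ∈ cand33, Dl l1 l4 ∧ Dl l2 l4 ∧ Dl l3 l4 := by decide

lemma no33 : ¬ HasOPSolution [3, 3] := by
  intro h
  obtain ⟨τ, hτ0, hct, hcov⟩ := conj_solution [3, 3] c33 c33_cycleType h (0 : Fin 5)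
  change Fin 5 → Equiv.Perm (Fin 6) at τ
  have hfpf : ∀ (i : Fin 5) x, τ i x ≠ x := fun i x => fpf_of_cycleType (τ i) [3, 3] (hct i) rfl x
  have hdisj : ∀ (i j : Fin 5), i ≠ j → ∀ x, τ i x ≠ τ j x :=
    fun i j hij x => arc_disjoint hct hcov hij x
  have horder : ∀ i, orderOf (τ i) = 3 := by
    intro i
    rw [orderOf_eq_of_cycleType (τ i) [3, 3] (hct i)]
    rfl
  have hP : ∀ i : Fin 5, i ≠ 0 → P33 (listOf (τ i)) := by
    intro i hi
    constructor
    · intro x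
      rw [ap_listOf]
      exact ⟨hfpf i x, by rw [← hτ0]; exact hdisj i (0 : Fin 5) hi x⟩
    · intro x
      have hp3 : τ i ^ 3 = 1 := by
        have h := pow_orderOf_eq_one (τ i)
        rwa [horder i] at h
      have h2 : (τ i ^ 3) x = x := by rw [hp3]; rfl
      rw [perm_pow3_apply] at h2
      rw [ap_listOf, ap_listOf, ap_listOf]
      exact h2
  have hmem : ∀ i : Fin 5, i ≠ 0 → listOf (τ i) ∈ cand33 := by
    intro i hi
    rw [cand33, List.mem_filter]
    exact ⟨listOf_mem_permutations _, decide_eq_true (hP i hi)⟩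
  apply core33
  have hD : ∀ (i j : Fin 5), i ≠ j → Dl (listOf (τ i)) (listOf (τ j)) := by
    intro i j hij x
    rw [ap_listOf, ap_listOf]
    exact hdisj i j hij x
  exact ⟨listOf (τ (1 : Fin 5)), hmem 1 (by decide), listOf (τ (2 : Fin 5)), hmem 2 (by decide),
    hD 1 2 (by decide), listOf (τ (3 : Fin 5)), hmem 3 (by decide), hD 1 3 (by decide),
    hD 2 3 (by decide), listOf (τ (4 : Fin 5)), hmem 4 (by decide), hD 1 4 (by decide),
    hD 2 4 (by decide), hD 3 4 (by decide)⟩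

-- ### the case [6]
def c6 : Equiv.Perm (Fin 6) := pc 6 [[0, 1, 2, 3, 4, 5]]

lemma c6_cycleType : c6.cycleType = ([6] : List ℕ) := by
  rw [c6, cycleType_pc _ (by decide) (by decide) (by decide)]
  rfl

def P6 (l : List (Fin 6)) : Prop :=
  (∀ i : Fin 6, ap l i ≠ i ∧ ap l i ≠ c6 i) ∧ (∃ i : Fin 6, ap l (ap l i) ≠ i) ∧
    (∃ i : Fin 6, ap l (ap l (ap l i)) ≠ i) ∧
    (∃ i : Fin 6, ap l (ap l (ap l (ap l i))) ≠ i)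

instance : DecidablePred P6 := fun l => by unfold P6; infer_instance

def cand6 : List (List (Fin 6)) :=
  (List.finRange 6).permutations'.filter (fun l => decide (P6 l))

lemma core6 : ¬ ∃ l1 ∈ cand6, ∃ l2 ∈ cand6, Dl l1 l2 ∧ ∃ l3 ∈ cand6,
    Dl l1 l3 ∧ Dl l2 l3 ∧ ∃ l4 ∈ cand6, Dl l1 l4 ∧ Dl l2 l4 ∧ Dl l3 l4 := by decide

lemma no6 : ¬ HasOPSolution [6] := by
  intro h
  obtain ⟨τ, hτ0, hct, hcov⟩ := conj_solution [6] c6 c6_cycleType h (0 : Fin 5)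
  change Fin 5 → Equiv.Perm (Fin 6) at τ
  have hfpf : ∀ (i : Fin 5) x, τ i x ≠ x := fun i x => fpf_of_cycleType (τ i) [6] (hct i) rfl x
  have hdisj : ∀ (i j : Fin 5), i ≠ j → ∀ x, τ i x ≠ τ j x :=
    fun i j hij x => arc_disjoint hct hcov hij x
  have horder : ∀ i, orderOf (τ i) = 6 := by
    intro i
    rw [orderOf_eq_of_cycleType (τ i) [6] (hct i)]
    rfl
  have hpow : ∀ (i : Fin 5) (k : ℕ), k ≠ 0 → ¬ (6 ∣ k) → τ i ^ k ≠ 1 := by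
    intro i k hk h6 hc
    have := orderOf_dvd_of_pow_eq_one hc
    rw [horder i] at this
    exact h6 this
  have hP : ∀ i : Fin 5, i ≠ 0 → P6 (listOf (τ i)) := by
    intro i hi
    refine ⟨?_, ?_, ?_, ?_⟩
    · intro x
      rw [ap_listOf]
      exact ⟨hfpf i x, by rw [← hτ0]; exact hdisj i (0 : Fin 5) hi x⟩
    · obtain ⟨x, hx⟩ := exists_pow_ne (τ i) 2 (hpow i 2 (by decide) (by decide))
      refine ⟨x, ?_⟩
      rw [ap_listOf, ap_listOf]
      rw [perm_pow2_apply] at hx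
      exact hx
    · obtain ⟨x, hx⟩ := exists_pow_ne (τ i) 3 (hpow i 3 (by decide) (by decide))
      refine ⟨x, ?_⟩
      rw [ap_listOf, ap_listOf, ap_listOf]
      rw [perm_pow3_apply] at hx
      exact hx
    · obtain ⟨x, hx⟩ := exists_pow_ne (τ i) 4 (hpow i 4 (by decide) (by decide))
      refine ⟨x, ?_⟩
      rw [ap_listOf, ap_listOf, ap_listOf, ap_listOf]
      rw [perm_pow4_apply] at hx
      exact hx
  have hmem : ∀ i : Fin 5, i ≠ 0 → listOf (τ i) ∈ cand6 := by
    intro i hi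
    rw [cand6, List.mem_filter]
    exact ⟨listOf_mem_permutations _, decide_eq_true (hP i hi)⟩
  apply core6
  have hD : ∀ (i j : Fin 5), i ≠ j → Dl (listOf (τ i)) (listOf (τ j)) := by
    intro i j hij x
    rw [ap_listOf, ap_listOf]
    exact hdisj i j hij x
  exact ⟨listOf (τ (1 : Fin 5)), hmem 1 (by decide), listOf (τ (2 : Fin 5)), hmem 2 (by decide),
    hD 1 2 (by decide), listOf (τ (3 : Fin 5)), hmem 3 (by decide), hD 1 3 (by decide),
    hD 2 3 (by decide), listOf (τ (4 : Fin 5)), hmem 4 (by decide), hD 1 4 (by decide),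
    hD 2 4 (by decide), hD 3 4 (by decide)⟩

def enumL : ℕ → ℕ → ℕ → List (List ℕ)
  | 0, _, _ => [[]]
  | fuel+1, budget, lo =>
    [] :: (List.range' lo (budget + 1 - lo)).flatMap
      (fun a => (enumL fuel (budget - a) a).map (a :: ·))

lemma mem_enumL : ∀ (fuel budget lo : ℕ) (m : List ℕ), (∀ x ∈ m, lo ≤ x) →
    m.Pairwise (· ≤ ·) → (∀ x ∈ m, 1 ≤ x) → m.sum ≤ budget → budget ≤ fuel →
    m ∈ enumL fuel budget lo := by
  intro fuel
  induction fuel with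
  | zero =>
    intro budget lo m hlo hs h1 hsum hf
    match m with
    | [] => simp [enumL]
    | a :: t =>
      exfalso
      have ha := h1 a (List.mem_cons_self)
      have : a + t.sum ≤ budget := by rw [← List.sum_cons]; exact hsum
      omega
  | succ fuel ih =>
    intro budget lo m hlo hs h1 hsum hf
    match m with
    | [] => exact List.mem_cons_self
    | a :: t =>
      have ha1 := h1 a (List.mem_cons_self)
      have halo := hlo a (List.mem_cons_self)
      have hsum' : a + t.sum ≤ budget := by rw [← List.sum_cons]; exact hsum
      have htsum : t.sum ≥ 0 := Nat.zero_le _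
      apply List.mem_cons_of_mem
      rw [List.mem_flatMap]
      refine ⟨a, ?_, ?_⟩
      · rw [List.mem_range'_1]
        constructor
        · exact halo
        · omega
      · rw [List.mem_map]
        refine ⟨t, ?_, rfl⟩
        apply ih (budget - a) a t
        · intro x hx
          exact (List.pairwise_cons.mp hs).1 x hx
        · exact (List.pairwise_cons.mp hs).2
        · intro x hx; exact h1 x (List.mem_cons_of_mem _ hx)
        · omega
        · omega

lemma case_2 : HasOPSolution [2] :=
  hasOP_of_data [2] ([[[0,1]]] : List (List (List (Fin 2)))) rfl (by decide) (by decide)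

lemma case_3 : HasOPSolution [3] :=
  hasOP_of_data [3] ([[[0,2,1]],
    [[1,2,0]]] : List (List (List (Fin 3)))) rfl (by decide) (by decide)

lemma case_2_2 : HasOPSolution [2, 2] :=
  hasOP_of_data [2, 2] ([[[0,2],[1,3]],
    [[1,0],[2,3]],
    [[2,1],[0,3]]] : List (List (List (Fin 4)))) rfl (by decide) (by decide)

lemma case_2_3 : HasOPSolution [2, 3] :=
  hasOP_of_data [2, 3] ([[[0,3],[1,2,4]],
    [[0,1],[2,3,4]],
    [[0,4],[1,3,2]],
    [[0,2],[1,4,3]]] : List (List (List (Fin 5)))) rfl (by decide) (by decide)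

lemma case_5 : HasOPSolution [5] :=
  hasOP_of_data [5] ([[[0,3,1,2,4]],
    [[1,0,2,3,4]],
    [[2,1,3,0,4]],
    [[3,2,0,1,4]]] : List (List (List (Fin 5)))) rfl (by decide) (by decide)

lemma case_2_2_2 : HasOPSolution [2, 2, 2] :=
  hasOP_of_data [2, 2, 2] ([[[0,3],[1,2],[4,5]],
    [[1,4],[2,3],[0,5]],
    [[2,0],[3,4],[1,5]],
    [[3,1],[4,0],[2,5]],
    [[4,2],[0,1],[3,5]]] : List (List (List (Fin 6)))) rfl (by decide) (by decide)

lemma case_2_4 : HasOPSolution [2, 4] :=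
  hasOP_of_data [2, 4] ([[[0,3,2,4],[1,5]],
    [[1,4,3,0],[2,5]],
    [[2,0,4,1],[3,5]],
    [[3,1,0,2],[4,5]],
    [[4,2,1,3],[0,5]]] : List (List (List (Fin 6)))) rfl (by decide) (by decide)

lemma case_2_2_3 : HasOPSolution [2, 2, 3] :=
  hasOP_of_data [2, 2, 3] ([[[0,5,6],[1,3],[2,4]],
    [[0,3,2],[1,5],[4,6]],
    [[0,1,4],[2,5],[3,6]],
    [[0,4,1],[2,6],[3,5]],
    [[0,6,5],[1,2],[3,4]],
    [[0,2,3],[1,6],[4,5]]] : List (List (List (Fin 7)))) rfl (by decide) (by decide)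

lemma case_2_5 : HasOPSolution [2, 5] :=
  hasOP_of_data [2, 5] ([[[0,4,6,1,5],[2,3]],
    [[0,2,5,1,6],[3,4]],
    [[0,1,3,5,4],[2,6]],
    [[0,5,2,4,1],[3,6]],
    [[0,6,4,5,3],[1,2]],
    [[0,3,1,4,2],[5,6]]] : List (List (List (Fin 7)))) rfl (by decide) (by decide)

lemma case_3_4 : HasOPSolution [3, 4] :=
  hasOP_of_data [3, 4] ([[[0,2,3,6],[1,5,4]],
    [[1,3,4,6],[2,0,5]],
    [[2,4,5,6],[3,1,0]],
    [[3,5,0,6],[4,2,1]],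
    [[4,0,1,6],[5,3,2]],
    [[5,1,2,6],[0,4,3]]] : List (List (List (Fin 7)))) rfl (by decide) (by decide)

lemma case_7 : HasOPSolution [7] :=
  hasOP_of_data [7] ([[[0,3,5,4,6,1,2]],
    [[1,4,0,5,6,2,3]],
    [[2,5,1,0,6,3,4]],
    [[3,0,2,1,6,4,5]],
    [[4,1,3,2,6,5,0]],
    [[5,2,4,3,6,0,1]]] : List (List (List (Fin 7)))) rfl (by decide) (by decide)

lemma case_2_2_2_2 : HasOPSolution [2, 2, 2, 2] :=
  hasOP_of_data [2, 2, 2, 2] ([[[0,7],[1,3],[2,6],[4,5]],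
    [[1,7],[2,4],[3,0],[5,6]],
    [[2,7],[3,5],[4,1],[6,0]],
    [[3,7],[4,6],[5,2],[0,1]],
    [[4,7],[5,0],[6,3],[1,2]],
    [[5,7],[6,1],[0,4],[2,3]],
    [[6,7],[0,2],[1,5],[3,4]]] : List (List (List (Fin 8)))) rfl (by decide) (by decide)

lemma case_2_2_4 : HasOPSolution [2, 2, 4] :=
  hasOP_of_data [2, 2, 4] ([[[0,7,2,4],[1,3],[5,6]],
    [[0,1,2,6],[3,4],[5,7]],
    [[0,5,2,7],[1,4],[3,6]],
    [[0,3],[1,6,2,5],[4,7]],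
    [[0,4,2,1],[3,5],[6,7]],
    [[0,6,4,5],[1,7],[2,3]],
    [[0,2],[1,5,4,6],[3,7]]] : List (List (List (Fin 8)))) rfl (by decide) (by decide)

lemma case_2_3_3 : HasOPSolution [2, 3, 3] :=
  hasOP_of_data [2, 3, 3] ([[[0,2,6],[1,4,3],[5,7]],
    [[1,3,0],[2,5,4],[6,7]],
    [[2,4,1],[3,6,5],[0,7]],
    [[3,5,2],[4,0,6],[1,7]],
    [[4,6,3],[5,1,0],[2,7]],
    [[5,0,4],[6,2,1],[3,7]],
    [[6,1,5],[0,3,2],[4,7]]] : List (List (List (Fin 8)))) rfl (by decide) (by decide)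

lemma case_2_6 : HasOPSolution [2, 6] :=
  hasOP_of_data [2, 6] ([[[0,2,5,3,4,1],[6,7]],
    [[1,3,6,4,5,2],[0,7]],
    [[2,4,0,5,6,3],[1,7]],
    [[3,5,1,6,0,4],[2,7]],
    [[4,6,2,0,1,5],[3,7]],
    [[5,0,3,1,2,6],[4,7]],
    [[6,1,4,2,3,0],[5,7]]] : List (List (List (Fin 8)))) rfl (by decide) (by decide)

lemma case_3_5 : HasOPSolution [3, 5] :=
  hasOP_of_data [3, 5] ([[[0,3,6,4,2],[1,5,7]],
    [[0,1,4,6,3],[2,7,5]],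
    [[0,4,3,1,7],[2,5,6]],
    [[0,7,2,6,1],[3,4,5]],
    [[0,5,4,7,6],[1,3,2]],
    [[0,2,3,7,4],[1,6,5]],
    [[0,6,7,3,5],[1,2,4]]] : List (List (List (Fin 8)))) rfl (by decide) (by decide)

lemma case_4_4 : HasOPSolution [4, 4] :=
  hasOP_of_data [4, 4] ([[[0,1,3,7],[2,5,6,4]],
    [[0,7,4,6],[1,2,3,5]],
    [[0,2,7,5],[1,4,3,6]],
    [[0,3,4,1],[2,6,5,7]],
    [[0,6,3,2],[1,5,4,7]],
    [[0,4,5,3],[1,7,6,2]],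
    [[0,5,2,4],[1,6,7,3]]] : List (List (List (Fin 8)))) rfl (by decide) (by decide)

lemma case_8 : HasOPSolution [8] :=
  hasOP_of_data [8] ([[[0,6,3,4,7,1,5,2]],
    [[0,7,3,5,4,2,1,6]],
    [[0,4,5,6,2,3,1,7]],
    [[0,5,3,6,1,2,7,4]],
    [[0,2,5,7,6,4,1,3]],
    [[0,3,2,4,6,7,5,1]],
    [[0,1,4,3,7,2,6,5]]] : List (List (List (Fin 8)))) rfl (by decide) (by decide)

lemma case_2_2_2_3 : HasOPSolution [2, 2, 2, 3] :=
  hasOP_of_data [2, 2, 2, 3] ([[[0,4,8],[1,3],[2,7],[5,6]],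
    [[1,5,8],[2,4],[3,0],[6,7]],
    [[2,6,8],[3,5],[4,1],[7,0]],
    [[3,7,8],[4,6],[5,2],[0,1]],
    [[4,0,8],[5,7],[6,3],[1,2]],
    [[5,1,8],[6,0],[7,4],[2,3]],
    [[6,2,8],[7,1],[0,5],[3,4]],
    [[7,3,8],[0,2],[1,6],[4,5]]] : List (List (List (Fin 9)))) rfl (by decide) (by decide)

lemma case_2_2_5 : HasOPSolution [2, 2, 5] :=
  hasOP_of_data [2, 2, 5] ([[[0,6,8,2,1],[3,7],[4,5]],
    [[0,8,7,6,5],[1,3],[2,4]],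
    [[0,3,5,7,8],[1,4],[2,6]],
    [[0,5,3,6,4],[1,8],[2,7]],
    [[0,7,5,2,3],[1,6],[4,8]],
    [[0,1,2,5,6],[3,8],[4,7]],
    [[0,4,6,3,2],[1,7],[5,8]],
    [[0,2,8,6,7],[1,5],[3,4]]] : List (List (List (Fin 9)))) rfl (by decide) (by decide)

lemma case_2_3_4 : HasOPSolution [2, 3, 4] :=
  hasOP_of_data [2, 3, 4] ([[[0,8,4,7],[1,6,2],[3,5]],
    [[1,8,5,0],[2,7,3],[4,6]],
    [[2,8,6,1],[3,0,4],[5,7]],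
    [[3,8,7,2],[4,1,5],[6,0]],
    [[4,8,0,3],[5,2,6],[7,1]],
    [[5,8,1,4],[6,3,7],[0,2]],
    [[6,8,2,5],[7,4,0],[1,3]],
    [[7,8,3,6],[0,5,1],[2,4]]] : List (List (List (Fin 9)))) rfl (by decide) (by decide)

lemma case_2_7 : HasOPSolution [2, 7] :=
  hasOP_of_data [2, 7] ([[[0,2,7,3,1,4,8],[5,6]],
    [[1,3,0,4,2,5,8],[6,7]],
    [[2,4,1,5,3,6,8],[7,0]],
    [[3,5,2,6,4,7,8],[0,1]],
    [[4,6,3,7,5,0,8],[1,2]],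
    [[5,7,4,0,6,1,8],[2,3]],
    [[6,0,5,1,7,2,8],[3,4]],
    [[7,1,6,2,0,3,8],[4,5]]] : List (List (List (Fin 9)))) rfl (by decide) (by decide)

lemma case_3_3_3 : HasOPSolution [3, 3, 3] :=
  hasOP_of_data [3, 3, 3] ([[[0,5,6],[1,4,2],[3,8,7]],
    [[1,6,7],[2,5,3],[4,8,0]],
    [[2,7,0],[3,6,4],[5,8,1]],
    [[3,0,1],[4,7,5],[6,8,2]],
    [[4,1,2],[5,0,6],[7,8,3]],
    [[5,2,3],[6,1,7],[0,8,4]],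
    [[6,3,4],[7,2,0],[1,8,5]],
    [[7,4,5],[0,3,1],[2,8,6]]] : List (List (List (Fin 9)))) rfl (by decide) (by decide)

lemma case_3_6 : HasOPSolution [3, 6] :=
  hasOP_of_data [3, 6] ([[[0,5,4,6,1,2],[3,8,7]],
    [[1,6,5,7,2,3],[4,8,0]],
    [[2,7,6,0,3,4],[5,8,1]],
    [[3,0,7,1,4,5],[6,8,2]],
    [[4,1,0,2,5,6],[7,8,3]],
    [[5,2,1,3,6,7],[0,8,4]],
    [[6,3,2,4,7,0],[1,8,5]],
    [[7,4,3,5,0,1],[2,8,6]]] : List (List (List (Fin 9)))) rfl (by decide) (by decide)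

lemma case_4_5 : HasOPSolution [4, 5] :=
  hasOP_of_data [4, 5] ([[[0,2,5,4,8],[1,6,7,3]],
    [[1,3,6,5,8],[2,7,0,4]],
    [[2,4,7,6,8],[3,0,1,5]],
    [[3,5,0,7,8],[4,1,2,6]],
    [[4,6,1,0,8],[5,2,3,7]],
    [[5,7,2,1,8],[6,3,4,0]],
    [[6,0,3,2,8],[7,4,5,1]],
    [[7,1,4,3,8],[0,5,6,2]]] : List (List (List (Fin 9)))) rfl (by decide) (by decide)

lemma case_9 : HasOPSolution [9] :=
  hasOP_of_data [9] ([[[0,7,5,1,4,6,8,2,3]],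
    [[1,0,6,2,5,7,8,3,4]],
    [[2,1,7,3,6,0,8,4,5]],
    [[3,2,0,4,7,1,8,5,6]],
    [[4,3,1,5,0,2,8,6,7]],
    [[5,4,2,6,1,3,8,7,0]],
    [[6,5,3,7,2,4,8,0,1]],
    [[7,6,4,0,3,5,8,1,2]]] : List (List (List (Fin 9)))) rfl (by decide) (by decide)

lemma case_2_2_2_2_2 : HasOPSolution [2, 2, 2, 2, 2] :=
  hasOP_of_data [2, 2, 2, 2, 2] ([[[0,5],[1,4],[2,3],[6,8],[7,9]],
    [[1,6],[2,5],[3,4],[7,0],[8,9]],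
    [[2,7],[3,6],[4,5],[8,1],[0,9]],
    [[3,8],[4,7],[5,6],[0,2],[1,9]],
    [[4,0],[5,8],[6,7],[1,3],[2,9]],
    [[5,1],[6,0],[7,8],[2,4],[3,9]],
    [[6,2],[7,1],[8,0],[3,5],[4,9]],
    [[7,3],[8,2],[0,1],[4,6],[5,9]],
    [[8,4],[0,3],[1,2],[5,7],[6,9]]] : List (List (List (Fin 10)))) rfl (by decide) (by decide)

lemma case_2_2_2_4 : HasOPSolution [2, 2, 2, 4] :=
  hasOP_of_data [2, 2, 2, 4] ([[[0,6,5,8],[1,3],[2,7],[4,9]],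
    [[1,7,6,0],[2,4],[3,8],[5,9]],
    [[2,8,7,1],[3,5],[4,0],[6,9]],
    [[3,0,8,2],[4,6],[5,1],[7,9]],
    [[4,1,0,3],[5,7],[6,2],[8,9]],
    [[5,2,1,4],[6,8],[7,3],[0,9]],
    [[6,3,2,5],[7,0],[8,4],[1,9]],
    [[7,4,3,6],[8,1],[0,5],[2,9]],
    [[8,5,4,7],[0,2],[1,6],[3,9]]] : List (List (List (Fin 10)))) rfl (by decide) (by decide)

lemma case_2_2_3_3 : HasOPSolution [2, 2, 3, 3] :=
  hasOP_of_data [2, 2, 3, 3] ([[[0,3,5],[1,8,4],[2,9],[6,7]],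
    [[1,4,6],[2,0,5],[3,9],[7,8]],
    [[2,5,7],[3,1,6],[4,9],[8,0]],
    [[3,6,8],[4,2,7],[5,9],[0,1]],
    [[4,7,0],[5,3,8],[6,9],[1,2]],
    [[5,8,1],[6,4,0],[7,9],[2,3]],
    [[6,0,2],[7,5,1],[8,9],[3,4]],
    [[7,1,3],[8,6,2],[0,9],[4,5]],
    [[8,2,4],[0,7,3],[1,9],[5,6]]] : List (List (List (Fin 10)))) rfl (by decide) (by decide)

lemma case_2_2_6 : HasOPSolution [2, 2, 6] :=
  hasOP_of_data [2, 2, 6] ([[[0,7,4,3,5,8],[1,6],[2,9]],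
    [[1,8,5,4,6,0],[2,7],[3,9]],
    [[2,0,6,5,7,1],[3,8],[4,9]],
    [[3,1,7,6,8,2],[4,0],[5,9]],
    [[4,2,8,7,0,3],[5,1],[6,9]],
    [[5,3,0,8,1,4],[6,2],[7,9]],
    [[6,4,1,0,2,5],[7,3],[8,9]],
    [[7,5,2,1,3,6],[8,4],[0,9]],
    [[8,6,3,2,4,7],[0,5],[1,9]]] : List (List (List (Fin 10)))) rfl (by decide) (by decide)

lemma case_2_3_5 : HasOPSolution [2, 3, 5] :=
  hasOP_of_data [2, 3, 5] ([[[0,7,3,4,1],[2,6,8],[5,9]],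
    [[1,8,4,5,2],[3,7,0],[6,9]],
    [[2,0,5,6,3],[4,8,1],[7,9]],
    [[3,1,6,7,4],[5,0,2],[8,9]],
    [[4,2,7,8,5],[6,1,3],[0,9]],
    [[5,3,8,0,6],[7,2,4],[1,9]],
    [[6,4,0,1,7],[8,3,5],[2,9]],
    [[7,5,1,2,8],[0,4,6],[3,9]],
    [[8,6,2,3,0],[1,5,7],[4,9]]] : List (List (List (Fin 10)))) rfl (by decide) (by decide)

lemma case_2_4_4 : HasOPSolution [2, 4, 4] :=
  hasOP_of_data [2, 4, 4] ([[[0,8,1,6],[2,3,7,4],[5,9]],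
    [[1,0,2,7],[3,4,8,5],[6,9]],
    [[2,1,3,8],[4,5,0,6],[7,9]],
    [[3,2,4,0],[5,6,1,7],[8,9]],
    [[4,3,5,1],[6,7,2,8],[0,9]],
    [[5,4,6,2],[7,8,3,0],[1,9]],
    [[6,5,7,3],[8,0,4,1],[2,9]],
    [[7,6,8,4],[0,1,5,2],[3,9]],
    [[8,7,0,5],[1,2,6,3],[4,9]]] : List (List (List (Fin 10)))) rfl (by decide) (by decide)

lemma case_2_8 : HasOPSolution [2, 8] :=
  hasOP_of_data [2, 8] ([[[0,2,5,3,7,8,4,1],[6,9]],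
    [[1,3,6,4,8,0,5,2],[7,9]],
    [[2,4,7,5,0,1,6,3],[8,9]],
    [[3,5,8,6,1,2,7,4],[0,9]],
    [[4,6,0,7,2,3,8,5],[1,9]],
    [[5,7,1,8,3,4,0,6],[2,9]],
    [[6,8,2,0,4,5,1,7],[3,9]],
    [[7,0,3,1,5,6,2,8],[4,9]],
    [[8,1,4,2,6,7,3,0],[5,9]]] : List (List (List (Fin 10)))) rfl (by decide) (by decide)

lemma case_3_3_4 : HasOPSolution [3, 3, 4] :=
  hasOP_of_data [3, 3, 4] ([[[0,9,6,5],[1,7,3],[2,8,4]],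
    [[0,4,7,9],[1,2,6],[3,8,5]],
    [[0,7,8,3],[1,5,2],[4,6,9]],
    [[0,2,7,4],[1,6,8],[3,5,9]],
    [[0,1,8,7],[2,3,6],[4,9,5]],
    [[0,5,8,6],[1,9,7],[2,4,3]],
    [[0,3,4,1],[2,9,8],[5,6,7]],
    [[0,6,4,8],[1,3,9],[2,5,7]],
    [[0,8,9,2],[1,4,5],[3,7,6]]] : List (List (List (Fin 10)))) rfl (by decide) (by decide)

lemma case_3_7 : HasOPSolution [3, 7] :=
  hasOP_of_data [3, 7] ([[[0,5,9,8,7,6,1],[2,3,4]],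
    [[0,7,1,9,2,8,6],[3,5,4]],
    [[0,3,2,1,5,7,4],[6,8,9]],
    [[0,9,7,5,2,6,3],[1,4,8]],
    [[0,2,9,1,3,7,8],[4,5,6]],
    [[0,1,7,2,4,6,9],[3,8,5]],
    [[0,6,2,7,3,9,5],[1,8,4]],
    [[0,4,9,3,1,6,7],[2,5,8]],
    [[0,8,3,6,5,1,2],[4,7,9]]] : List (List (List (Fin 10)))) rfl (by decide) (by decide)

lemma case_4_6 : HasOPSolution [4, 6] :=
  hasOP_of_data [4, 6] ([[[0,7,1,4,5,9],[2,8,6,3]],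
    [[0,4,2,9,8,7],[1,3,6,5]],
    [[0,3,1,5,2,6],[4,8,9,7]],
    [[0,8,4,6,9,1],[2,3,5,7]],
    [[0,9,6,1,7,5],[2,4,3,8]],
    [[0,2,7,6,8,3],[1,9,5,4]],
    [[0,6,7,3,9,4],[1,2,5,8]],
    [[0,5,6,2,1,8],[3,4,7,9]],
    [[0,1,6,4,9,2],[3,7,8,5]]] : List (List (List (Fin 10)))) rfl (by decide) (by decide)

lemma case_5_5 : HasOPSolution [5, 5] :=
  hasOP_of_data [5, 5] ([[[0,3,6,8,9],[1,5,2,7,4]],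
    [[0,1,9,5,3],[2,8,6,4,7]],
    [[0,7,9,3,8],[1,4,2,6,5]],
    [[0,6,9,1,7],[2,4,3,5,8]],
    [[0,8,1,3,4],[2,9,7,5,6]],
    [[0,2,5,7,1],[3,9,8,4,6]],
    [[0,9,4,8,5],[1,2,3,7,6]],
    [[0,4,5,9,6],[1,8,7,3,2]],
    [[0,5,4,9,2],[1,6,7,8,3]]] : List (List (List (Fin 10)))) rfl (by decide) (by decide)

lemma case_10 : HasOPSolution [10] :=
  hasOP_of_data [10] ([[[0,2,8,9,1,7,6,4,3,5]],
    [[0,3,1,8,7,2,6,5,4,9]],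
    [[0,8,1,6,7,3,9,5,2,4]],
    [[0,4,7,8,2,1,5,9,3,6]],
    [[0,1,9,4,2,5,8,6,3,7]],
    [[0,9,2,7,5,1,3,4,6,8]],
    [[0,6,9,7,1,4,8,5,3,2]],
    [[0,7,4,5,6,1,2,9,8,3]],
    [[0,5,7,9,6,2,3,8,4,1]]] : List (List (List (Fin 10)))) rfl (by decide) (by decide)

lemma case_2_2_2_2_3 : HasOPSolution [2, 2, 2, 2, 3] :=
  hasOP_of_data [2, 2, 2, 2, 3] ([[[0,10,5],[1,7],[2,9],[3,4],[6,8]],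
    [[1,10,6],[2,8],[3,0],[4,5],[7,9]],
    [[2,10,7],[3,9],[4,1],[5,6],[8,0]],
    [[3,10,8],[4,0],[5,2],[6,7],[9,1]],
    [[4,10,9],[5,1],[6,3],[7,8],[0,2]],
    [[5,10,0],[6,2],[7,4],[8,9],[1,3]],
    [[6,10,1],[7,3],[8,5],[9,0],[2,4]],
    [[7,10,2],[8,4],[9,6],[0,1],[3,5]],
    [[8,10,3],[9,5],[0,7],[1,2],[4,6]],
    [[9,10,4],[0,6],[1,8],[2,3],[5,7]]] : List (List (List (Fin 11)))) rfl (by decide) (by decide)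

lemma case_2_2_2_5 : HasOPSolution [2, 2, 2, 5] :=
  hasOP_of_data [2, 2, 2, 5] ([[[0,5,7,10,3],[1,9],[2,8],[4,6]],
    [[0,9,3,6,10],[1,8],[2,7],[4,5]],
    [[0,8,10,7,5],[1,2],[3,4],[6,9]],
    [[0,4,7,3,1],[2,5],[6,8],[9,10]],
    [[0,7,1,10,8],[2,3],[4,9],[5,6]],
    [[0,10,6,7,4],[1,5],[2,9],[3,8]],
    [[0,6,1,3,7],[2,10],[4,8],[5,9]],
    [[0,3,10,1,6],[2,4],[5,8],[7,9]],
    [[0,2,6,3,9],[1,4],[5,10],[7,8]],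
    [[0,1,7,6,2],[3,5],[4,10],[8,9]]] : List (List (List (Fin 11)))) rfl (by decide) (by decide)

lemma case_2_2_3_4 : HasOPSolution [2, 2, 3, 4] :=
  hasOP_of_data [2, 2, 3, 4] ([[[0,10,5,2],[1,4,6],[3,9],[7,8]],
    [[1,10,6,3],[2,5,7],[4,0],[8,9]],
    [[2,10,7,4],[3,6,8],[5,1],[9,0]],
    [[3,10,8,5],[4,7,9],[6,2],[0,1]],
    [[4,10,9,6],[5,8,0],[7,3],[1,2]],
    [[5,10,0,7],[6,9,1],[8,4],[2,3]],
    [[6,10,1,8],[7,0,2],[9,5],[3,4]],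
    [[7,10,2,9],[8,1,3],[0,6],[4,5]],
    [[8,10,3,0],[9,2,4],[1,7],[5,6]],
    [[9,10,4,1],[0,3,5],[2,8],[6,7]]] : List (List (List (Fin 11)))) rfl (by decide) (by decide)

lemma case_2_2_7 : HasOPSolution [2, 2, 7] :=
  hasOP_of_data [2, 2, 7] ([[[0,4,9,2,8,5,10],[1,3],[6,7]],
    [[1,5,0,3,9,6,10],[2,4],[7,8]],
    [[2,6,1,4,0,7,10],[3,5],[8,9]],
    [[3,7,2,5,1,8,10],[4,6],[9,0]],
    [[4,8,3,6,2,9,10],[5,7],[0,1]],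
    [[5,9,4,7,3,0,10],[6,8],[1,2]],
    [[6,0,5,8,4,1,10],[7,9],[2,3]],
    [[7,1,6,9,5,2,10],[8,0],[3,4]],
    [[8,2,7,0,6,3,10],[9,1],[4,5]],
    [[9,3,8,1,7,4,10],[0,2],[5,6]]] : List (List (List (Fin 11)))) rfl (by decide) (by decide)

lemma case_2_3_3_3 : HasOPSolution [2, 3, 3, 3] :=
  hasOP_of_data [2, 3, 3, 3] ([[[0,8,1],[2,7,10],[3,4,6],[5,9]],
    [[1,9,2],[3,8,10],[4,5,7],[6,0]],
    [[2,0,3],[4,9,10],[5,6,8],[7,1]],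
    [[3,1,4],[5,0,10],[6,7,9],[8,2]],
    [[4,2,5],[6,1,10],[7,8,0],[9,3]],
    [[5,3,6],[7,2,10],[8,9,1],[0,4]],
    [[6,4,7],[8,3,10],[9,0,2],[1,5]],
    [[7,5,8],[9,4,10],[0,1,3],[2,6]],
    [[8,6,9],[0,5,10],[1,2,4],[3,7]],
    [[9,7,0],[1,6,10],[2,3,5],[4,8]]] : List (List (List (Fin 11)))) rfl (by decide) (by decide)

lemma case_2_3_6 : HasOPSolution [2, 3, 6] :=
  hasOP_of_data [2, 3, 6] ([[[0,6,7,1,3,2],[4,9,10],[5,8]],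
    [[1,7,8,2,4,3],[5,0,10],[6,9]],
    [[2,8,9,3,5,4],[6,1,10],[7,0]],
    [[3,9,0,4,6,5],[7,2,10],[8,1]],
    [[4,0,1,5,7,6],[8,3,10],[9,2]],
    [[5,1,2,6,8,7],[9,4,10],[0,3]],
    [[6,2,3,7,9,8],[0,5,10],[1,4]],
    [[7,3,4,8,0,9],[1,6,10],[2,5]],
    [[8,4,5,9,1,0],[2,7,10],[3,6]],
    [[9,5,6,0,2,1],[3,8,10],[4,7]]] : List (List (List (Fin 11)))) rfl (by decide) (by decide)

lemma case_2_4_5 : HasOPSolution [2, 4, 5] :=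
  hasOP_of_data [2, 4, 5] ([[[0,6,3,1,5],[2,4,10,9],[7,8]],
    [[1,7,4,2,6],[3,5,10,0],[8,9]],
    [[2,8,5,3,7],[4,6,10,1],[9,0]],
    [[3,9,6,4,8],[5,7,10,2],[0,1]],
    [[4,0,7,5,9],[6,8,10,3],[1,2]],
    [[5,1,8,6,0],[7,9,10,4],[2,3]],
    [[6,2,9,7,1],[8,0,10,5],[3,4]],
    [[7,3,0,8,2],[9,1,10,6],[4,5]],
    [[8,4,1,9,3],[0,2,10,7],[5,6]],
    [[9,5,2,0,4],[1,3,10,8],[6,7]]] : List (List (List (Fin 11)))) rfl (by decide) (by decide)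

lemma case_2_9 : HasOPSolution [2, 9] :=
  hasOP_of_data [2, 9] ([[[0,8,3,9,2,4,1,5,10],[6,7]],
    [[1,9,4,0,3,5,2,6,10],[7,8]],
    [[2,0,5,1,4,6,3,7,10],[8,9]],
    [[3,1,6,2,5,7,4,8,10],[9,0]],
    [[4,2,7,3,6,8,5,9,10],[0,1]],
    [[5,3,8,4,7,9,6,0,10],[1,2]],
    [[6,4,9,5,8,0,7,1,10],[2,3]],
    [[7,5,0,6,9,1,8,2,10],[3,4]],
    [[8,6,1,7,0,2,9,3,10],[4,5]],
    [[9,7,2,8,1,3,0,4,10],[5,6]]] : List (List (List (Fin 11)))) rfl (by decide) (by decide)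

lemma case_3_3_5 : HasOPSolution [3, 3, 5] :=
  hasOP_of_data [3, 3, 5] ([[[0,2,9,7,6],[1,4,5],[3,10,8]],
    [[1,3,0,8,7],[2,5,6],[4,10,9]],
    [[2,4,1,9,8],[3,6,7],[5,10,0]],
    [[3,5,2,0,9],[4,7,8],[6,10,1]],
    [[4,6,3,1,0],[5,8,9],[7,10,2]],
    [[5,7,4,2,1],[6,9,0],[8,10,3]],
    [[6,8,5,3,2],[7,0,1],[9,10,4]],
    [[7,9,6,4,3],[8,1,2],[0,10,5]],
    [[8,0,7,5,4],[9,2,3],[1,10,6]],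
    [[9,1,8,6,5],[0,3,4],[2,10,7]]] : List (List (List (Fin 11)))) rfl (by decide) (by decide)

lemma case_3_4_4 : HasOPSolution [3, 4, 4] :=
  hasOP_of_data [3, 4, 4] ([[[0,1,7,6],[2,9,10,4],[3,5,8]],
    [[1,2,8,7],[3,0,10,5],[4,6,9]],
    [[2,3,9,8],[4,1,10,6],[5,7,0]],
    [[3,4,0,9],[5,2,10,7],[6,8,1]],
    [[4,5,1,0],[6,3,10,8],[7,9,2]],
    [[5,6,2,1],[7,4,10,9],[8,0,3]],
    [[6,7,3,2],[8,5,10,0],[9,1,4]],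
    [[7,8,4,3],[9,6,10,1],[0,2,5]],
    [[8,9,5,4],[0,7,10,2],[1,3,6]],
    [[9,0,6,5],[1,8,10,3],[2,4,7]]] : List (List (List (Fin 11)))) rfl (by decide) (by decide)

lemma case_3_8 : HasOPSolution [3, 8] :=
  hasOP_of_data [3, 8] ([[[0,3,4,6,1,7,10,2],[5,9,8]],
    [[1,4,5,7,2,8,10,3],[6,0,9]],
    [[2,5,6,8,3,9,10,4],[7,1,0]],
    [[3,6,7,9,4,0,10,5],[8,2,1]],
    [[4,7,8,0,5,1,10,6],[9,3,2]],
    [[5,8,9,1,6,2,10,7],[0,4,3]],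
    [[6,9,0,2,7,3,10,8],[1,5,4]],
    [[7,0,1,3,8,4,10,9],[2,6,5]],
    [[8,1,2,4,9,5,10,0],[3,7,6]],
    [[9,2,3,5,0,6,10,1],[4,8,7]]] : List (List (List (Fin 11)))) rfl (by decide) (by decide)

lemma case_4_7 : HasOPSolution [4, 7] :=
  hasOP_of_data [4, 7] ([[[0,3,8,7,9,5,10],[1,2,6,4]],
    [[1,4,9,8,0,6,10],[2,3,7,5]],
    [[2,5,0,9,1,7,10],[3,4,8,6]],
    [[3,6,1,0,2,8,10],[4,5,9,7]],
    [[4,7,2,1,3,9,10],[5,6,0,8]],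
    [[5,8,3,2,4,0,10],[6,7,1,9]],
    [[6,9,4,3,5,1,10],[7,8,2,0]],
    [[7,0,5,4,6,2,10],[8,9,3,1]],
    [[8,1,6,5,7,3,10],[9,0,4,2]],
    [[9,2,7,6,8,4,10],[0,1,5,3]]] : List (List (List (Fin 11)))) rfl (by decide) (by decide)

lemma case_5_6 : HasOPSolution [5, 6] :=
  hasOP_of_data [5, 6] ([[[0,2,7,8,5,4],[1,10,6,9,3]],
    [[1,3,8,9,6,5],[2,10,7,0,4]],
    [[2,4,9,0,7,6],[3,10,8,1,5]],
    [[3,5,0,1,8,7],[4,10,9,2,6]],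
    [[4,6,1,2,9,8],[5,10,0,3,7]],
    [[5,7,2,3,0,9],[6,10,1,4,8]],
    [[6,8,3,4,1,0],[7,10,2,5,9]],
    [[7,9,4,5,2,1],[8,10,3,6,0]],
    [[8,0,5,6,3,2],[9,10,4,7,1]],
    [[9,1,6,7,4,3],[0,10,5,8,2]]] : List (List (List (Fin 11)))) rfl (by decide) (by decide)

lemma case_11 : HasOPSolution [11] :=
  hasOP_of_data [11] ([[[0,6,5,3,4,9,1,8,2,10,7]],
    [[1,7,6,4,5,0,2,9,3,10,8]],
    [[2,8,7,5,6,1,3,0,4,10,9]],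
    [[3,9,8,6,7,2,4,1,5,10,0]],
    [[4,0,9,7,8,3,5,2,6,10,1]],
    [[5,1,0,8,9,4,6,3,7,10,2]],
    [[6,2,1,9,0,5,7,4,8,10,3]],
    [[7,3,2,0,1,6,8,5,9,10,4]],
    [[8,4,3,1,2,7,9,6,0,10,5]],
    [[9,5,4,2,3,8,0,7,1,10,6]]] : List (List (List (Fin 11)))) rfl (by decide) (by decide)

lemma case_2_2_2_2_2_2 : HasOPSolution [2, 2, 2, 2, 2, 2] :=
  hasOP_of_data [2, 2, 2, 2, 2, 2] ([[[0,2],[1,6],[3,10],[4,7],[5,11],[8,9]],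
    [[1,3],[2,7],[4,0],[5,8],[6,11],[9,10]],
    [[2,4],[3,8],[5,1],[6,9],[7,11],[10,0]],
    [[3,5],[4,9],[6,2],[7,10],[8,11],[0,1]],
    [[4,6],[5,10],[7,3],[8,0],[9,11],[1,2]],
    [[5,7],[6,0],[8,4],[9,1],[10,11],[2,3]],
    [[6,8],[7,1],[9,5],[10,2],[0,11],[3,4]],
    [[7,9],[8,2],[10,6],[0,3],[1,11],[4,5]],
    [[8,10],[9,3],[0,7],[1,4],[2,11],[5,6]],
    [[9,0],[10,4],[1,8],[2,5],[3,11],[6,7]],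
    [[10,1],[0,5],[2,9],[3,6],[4,11],[7,8]]] : List (List (List (Fin 12)))) rfl (by decide) (by decide)

lemma case_2_2_2_2_4 : HasOPSolution [2, 2, 2, 2, 4] :=
  hasOP_of_data [2, 2, 2, 2, 4] ([[[0,8,4,7],[1,6],[2,11],[3,5],[9,10]],
    [[1,9,5,8],[2,7],[3,11],[4,6],[10,0]],
    [[2,10,6,9],[3,8],[4,11],[5,7],[0,1]],
    [[3,0,7,10],[4,9],[5,11],[6,8],[1,2]],
    [[4,1,8,0],[5,10],[6,11],[7,9],[2,3]],
    [[5,2,9,1],[6,0],[7,11],[8,10],[3,4]],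
    [[6,3,10,2],[7,1],[8,11],[9,0],[4,5]],
    [[7,4,0,3],[8,2],[9,11],[10,1],[5,6]],
    [[8,5,1,4],[9,3],[10,11],[0,2],[6,7]],
    [[9,6,2,5],[10,4],[0,11],[1,3],[7,8]],
    [[10,7,3,6],[0,5],[1,11],[2,4],[8,9]]] : List (List (List (Fin 12)))) rfl (by decide) (by decide)

lemma case_2_2_2_3_3 : HasOPSolution [2, 2, 2, 3, 3] :=
  hasOP_of_data [2, 2, 2, 3, 3] ([[[0,5,9],[1,10,6],[2,3],[4,7],[8,11]],
    [[1,6,10],[2,0,7],[3,4],[5,8],[9,11]],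
    [[2,7,0],[3,1,8],[4,5],[6,9],[10,11]],
    [[3,8,1],[4,2,9],[5,6],[7,10],[0,11]],
    [[4,9,2],[5,3,10],[6,7],[8,0],[1,11]],
    [[5,10,3],[6,4,0],[7,8],[9,1],[2,11]],
    [[6,0,4],[7,5,1],[8,9],[10,2],[3,11]],
    [[7,1,5],[8,6,2],[9,10],[0,3],[4,11]],
    [[8,2,6],[9,7,3],[10,0],[1,4],[5,11]],
    [[9,3,7],[10,8,4],[0,1],[2,5],[6,11]],
    [[10,4,8],[0,9,5],[1,2],[3,6],[7,11]]] : List (List (List (Fin 12)))) rfl (by decide) (by decide)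

lemma case_2_2_2_6 : HasOPSolution [2, 2, 2, 6] :=
  hasOP_of_data [2, 2, 2, 6] ([[[0,10,7,8,3,6],[1,11],[2,4],[5,9]],
    [[1,0,8,9,4,7],[2,11],[3,5],[6,10]],
    [[2,1,9,10,5,8],[3,11],[4,6],[7,0]],
    [[3,2,10,0,6,9],[4,11],[5,7],[8,1]],
    [[4,3,0,1,7,10],[5,11],[6,8],[9,2]],
    [[5,4,1,2,8,0],[6,11],[7,9],[10,3]],
    [[6,5,2,3,9,1],[7,11],[8,10],[0,4]],
    [[7,6,3,4,10,2],[8,11],[9,0],[1,5]],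
    [[8,7,4,5,0,3],[9,11],[10,1],[2,6]],
    [[9,8,5,6,1,4],[10,11],[0,2],[3,7]],
    [[10,9,6,7,2,5],[0,11],[1,3],[4,8]]] : List (List (List (Fin 12)))) rfl (by decide) (by decide)

lemma case_2_2_3_5 : HasOPSolution [2, 2, 3, 5] :=
  hasOP_of_data [2, 2, 3, 5] ([[[0,1,6,4,3],[2,8,10],[5,9],[7,11]],
    [[1,2,7,5,4],[3,9,0],[6,10],[8,11]],
    [[2,3,8,6,5],[4,10,1],[7,0],[9,11]],
    [[3,4,9,7,6],[5,0,2],[8,1],[10,11]],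
    [[4,5,10,8,7],[6,1,3],[9,2],[0,11]],
    [[5,6,0,9,8],[7,2,4],[10,3],[1,11]],
    [[6,7,1,10,9],[8,3,5],[0,4],[2,11]],
    [[7,8,2,0,10],[9,4,6],[1,5],[3,11]],
    [[8,9,3,1,0],[10,5,7],[2,6],[4,11]],
    [[9,10,4,2,1],[0,6,8],[3,7],[5,11]],
    [[10,0,5,3,2],[1,7,9],[4,8],[6,11]]] : List (List (List (Fin 12)))) rfl (by decide) (by decide)

lemma case_2_2_4_4 : HasOPSolution [2, 2, 4, 4] :=
  hasOP_of_data [2, 2, 4, 4] ([[[0,7,1,2],[3,5,4,10],[6,9],[8,11]],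
    [[1,8,2,3],[4,6,5,0],[7,10],[9,11]],
    [[2,9,3,4],[5,7,6,1],[8,0],[10,11]],
    [[3,10,4,5],[6,8,7,2],[9,1],[0,11]],
    [[4,0,5,6],[7,9,8,3],[10,2],[1,11]],
    [[5,1,6,7],[8,10,9,4],[0,3],[2,11]],
    [[6,2,7,8],[9,0,10,5],[1,4],[3,11]],
    [[7,3,8,9],[10,1,0,6],[2,5],[4,11]],
    [[8,4,9,10],[0,2,1,7],[3,6],[5,11]],
    [[9,5,10,0],[1,3,2,8],[4,7],[6,11]],
    [[10,6,0,1],[2,4,3,9],[5,8],[7,11]]] : List (List (List (Fin 12)))) rfl (by decide) (by decide)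

lemma case_2_2_8 : HasOPSolution [2, 2, 8] :=
  hasOP_of_data [2, 2, 8] ([[[0,10,3,8,9,5,7,2],[1,4],[6,11]],
    [[1,0,4,9,10,6,8,3],[2,5],[7,11]],
    [[2,1,5,10,0,7,9,4],[3,6],[8,11]],
    [[3,2,6,0,1,8,10,5],[4,7],[9,11]],
    [[4,3,7,1,2,9,0,6],[5,8],[10,11]],
    [[5,4,8,2,3,10,1,7],[6,9],[0,11]],
    [[6,5,9,3,4,0,2,8],[7,10],[1,11]],
    [[7,6,10,4,5,1,3,9],[8,0],[2,11]],
    [[8,7,0,5,6,2,4,10],[9,1],[3,11]],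
    [[9,8,1,6,7,3,5,0],[10,2],[4,11]],
    [[10,9,2,7,8,4,6,1],[0,3],[5,11]]] : List (List (List (Fin 12)))) rfl (by decide) (by decide)

lemma case_2_3_3_4 : HasOPSolution [2, 3, 3, 4] :=
  hasOP_of_data [2, 3, 3, 4] ([[[0,3,9,7],[1,2,4],[5,10,6],[8,11]],
    [[1,4,10,8],[2,3,5],[6,0,7],[9,11]],
    [[2,5,0,9],[3,4,6],[7,1,8],[10,11]],
    [[3,6,1,10],[4,5,7],[8,2,9],[0,11]],
    [[4,7,2,0],[5,6,8],[9,3,10],[1,11]],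
    [[5,8,3,1],[6,7,9],[10,4,0],[2,11]],
    [[6,9,4,2],[7,8,10],[0,5,1],[3,11]],
    [[7,10,5,3],[8,9,0],[1,6,2],[4,11]],
    [[8,0,6,4],[9,10,1],[2,7,3],[5,11]],
    [[9,1,7,5],[10,0,2],[3,8,4],[6,11]],
    [[10,2,8,6],[0,1,3],[4,9,5],[7,11]]] : List (List (List (Fin 12)))) rfl (by decide) (by decide)

lemma case_2_3_7 : HasOPSolution [2, 3, 7] :=
  hasOP_of_data [2, 3, 7] ([[[0,3,4,8,7,9,6],[1,10,5],[2,11]],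
    [[1,4,5,9,8,10,7],[2,0,6],[3,11]],
    [[2,5,6,10,9,0,8],[3,1,7],[4,11]],
    [[3,6,7,0,10,1,9],[4,2,8],[5,11]],
    [[4,7,8,1,0,2,10],[5,3,9],[6,11]],
    [[5,8,9,2,1,3,0],[6,4,10],[7,11]],
    [[6,9,10,3,2,4,1],[7,5,0],[8,11]],
    [[7,10,0,4,3,5,2],[8,6,1],[9,11]],
    [[8,0,1,5,4,6,3],[9,7,2],[10,11]],
    [[9,1,2,6,5,7,4],[10,8,3],[0,11]],
    [[10,2,3,7,6,8,5],[0,9,4],[1,11]]] : List (List (List (Fin 12)))) rfl (by decide) (by decide)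

lemma case_2_4_6 : HasOPSolution [2, 4, 6] :=
  hasOP_of_data [2, 4, 6] ([[[0,4,1,7,10,9],[2,3,8,6],[5,11]],
    [[1,5,2,8,0,10],[3,4,9,7],[6,11]],
    [[2,6,3,9,1,0],[4,5,10,8],[7,11]],
    [[3,7,4,10,2,1],[5,6,0,9],[8,11]],
    [[4,8,5,0,3,2],[6,7,1,10],[9,11]],
    [[5,9,6,1,4,3],[7,8,2,0],[10,11]],
    [[6,10,7,2,5,4],[8,9,3,1],[0,11]],
    [[7,0,8,3,6,5],[9,10,4,2],[1,11]],
    [[8,1,9,4,7,6],[10,0,5,3],[2,11]],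
    [[9,2,10,5,8,7],[0,1,6,4],[3,11]],
    [[10,3,0,6,9,8],[1,2,7,5],[4,11]]] : List (List (List (Fin 12)))) rfl (by decide) (by decide)

lemma case_2_5_5 : HasOPSolution [2, 5, 5] :=
  hasOP_of_data [2, 5, 5] ([[[0,3,4,10,1],[2,7,5,9,6],[8,11]],
    [[1,4,5,0,2],[3,8,6,10,7],[9,11]],
    [[2,5,6,1,3],[4,9,7,0,8],[10,11]],
    [[3,6,7,2,4],[5,10,8,1,9],[0,11]],
    [[4,7,8,3,5],[6,0,9,2,10],[1,11]],
    [[5,8,9,4,6],[7,1,10,3,0],[2,11]],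
    [[6,9,10,5,7],[8,2,0,4,1],[3,11]],
    [[7,10,0,6,8],[9,3,1,5,2],[4,11]],
    [[8,0,1,7,9],[10,4,2,6,3],[5,11]],
    [[9,1,2,8,10],[0,5,3,7,4],[6,11]],
    [[10,2,3,9,0],[1,6,4,8,5],[7,11]]] : List (List (List (Fin 12)))) rfl (by decide) (by decide)

lemma case_2_10 : HasOPSolution [2, 10] :=
  hasOP_of_data [2, 10] ([[[0,2,1,8,6,7,10,5,9,3],[4,11]],
    [[1,3,2,9,7,8,0,6,10,4],[5,11]],
    [[2,4,3,10,8,9,1,7,0,5],[6,11]],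
    [[3,5,4,0,9,10,2,8,1,6],[7,11]],
    [[4,6,5,1,10,0,3,9,2,7],[8,11]],
    [[5,7,6,2,0,1,4,10,3,8],[9,11]],
    [[6,8,7,3,1,2,5,0,4,9],[10,11]],
    [[7,9,8,4,2,3,6,1,5,10],[0,11]],
    [[8,10,9,5,3,4,7,2,6,0],[1,11]],
    [[9,0,10,6,4,5,8,3,7,1],[2,11]],
    [[10,1,0,7,5,6,9,4,8,2],[3,11]]] : List (List (List (Fin 12)))) rfl (by decide) (by decide)

lemma case_3_3_3_3 : HasOPSolution [3, 3, 3, 3] :=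
  hasOP_of_data [3, 3, 3, 3] ([[[0,3,7],[1,2,9],[4,8,5],[6,11,10]],
    [[0,4,2],[1,10,7],[3,11,5],[6,8,9]],
    [[0,11,6],[1,3,2],[4,10,9],[5,8,7]],
    [[0,9,11],[1,6,4],[2,7,8],[3,5,10]],
    [[0,7,9],[1,8,11],[2,6,5],[3,10,4]],
    [[0,2,4],[1,7,10],[3,8,6],[5,11,9]],
    [[0,5,1],[2,10,11],[3,6,7],[4,9,8]],
    [[0,10,8],[1,9,3],[2,5,6],[4,7,11]],
    [[0,8,3],[1,4,6],[2,11,7],[5,9,10]],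
    [[0,6,10],[1,11,8],[2,3,9],[4,5,7]],
    [[0,1,5],[2,8,10],[3,4,11],[6,9,7]]] : List (List (List (Fin 12)))) rfl (by decide) (by decide)

lemma case_3_3_6 : HasOPSolution [3, 3, 6] :=
  hasOP_of_data [3, 3, 6] ([[[0,9,4,3,6,8],[1,2,5],[7,10,11]],
    [[0,3,9,11,1,6],[2,7,5],[4,8,10]],
    [[0,4,2,10,8,9],[1,7,3],[5,6,11]],
    [[0,11,6,9,5,10],[1,8,4],[2,3,7]],
    [[0,5,9,7,6,2],[1,11,8],[3,4,10]],
    [[0,8,2,6,10,5],[1,4,7],[3,11,9]],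
    [[0,10,1,9,8,7],[2,11,3],[4,6,5]],
    [[0,1,3,5,11,4],[2,9,10],[6,7,8]],
    [[0,7,9,2,4,11],[1,10,6],[3,8,5]],
    [[0,6,3,10,9,1],[2,8,11],[4,5,7]],
    [[0,2,1,5,8,3],[4,9,6],[7,11,10]]] : List (List (List (Fin 12)))) rfl (by decide) (by decide)

lemma case_3_4_5 : HasOPSolution [3, 4, 5] :=
  hasOP_of_data [3, 4, 5] ([[[0,6,2,3,11],[1,8,5,4],[7,10,9]],
    [[0,1,3,5,7],[2,8,4,10],[6,9,11]],
    [[0,9,2,4,8],[1,6,5,3],[7,11,10]],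
    [[0,8,11,9,1],[2,6,10,5],[3,7,4]],
    [[0,7,3,9,5],[1,10,6,8],[2,11,4]],
    [[0,10,4,5,6],[1,11,7,2],[3,8,9]],
    [[0,4,6,3,2],[1,5,10,11],[7,9,8]],
    [[0,3,6,4,9],[1,7,8,10],[2,5,11]],
    [[0,5,8,2,10],[1,9,6,7],[3,4,11]],
    [[0,11,5,9,4],[1,2,7,6],[3,10,8]],
    [[0,2,9,10,3],[1,4,7,5],[6,11,8]]] : List (List (List (Fin 12)))) rfl (by decide) (by decide)

lemma case_3_9 : HasOPSolution [3, 9] :=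
  hasOP_of_data [3, 9] ([[[0,5,10,7,2,1,8,11,3],[4,6,9]],
    [[0,7,10,8,4,2,3,5,6],[1,9,11]],
    [[0,11,2,6,1,4,7,8,9],[3,10,5]],
    [[0,3,7,9,2,8,6,5,1],[4,11,10]],
    [[0,1,5,9,7,4,8,2,10],[3,11,6]],
    [[0,2,11,8,10,1,3,6,7],[4,9,5]],
    [[0,10,6,8,3,9,1,11,4],[2,7,5]],
    [[0,6,11,9,10,2,4,5,8],[1,7,3]],
    [[0,9,8,1,6,2,5,7,11],[3,4,10]],
    [[0,4,3,8,5,11,7,1,2],[6,10,9]],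
    [[0,8,7,6,4,1,10,11,5],[2,9,3]]] : List (List (List (Fin 12)))) rfl (by decide) (by decide)

lemma case_4_4_4 : HasOPSolution [4, 4, 4] :=
  hasOP_of_data [4, 4, 4] ([[[0,6,3,1],[2,5,11,10],[4,7,9,8]],
    [[0,11,4,5],[1,10,9,7],[2,8,3,6]],
    [[0,2,7,4],[1,6,9,11],[3,10,8,5]],
    [[0,8,2,6],[1,4,3,5],[7,11,9,10]],
    [[0,4,2,11],[1,9,6,8],[3,7,5,10]],
    [[0,3,2,10],[1,5,8,9],[4,11,7,6]],
    [[0,7,3,9],[1,8,11,2],[4,10,6,5]],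
    [[0,10,5,7],[1,2,9,4],[3,8,6,11]],
    [[0,1,7,8],[2,3,4,9],[5,6,10,11]],
    [[0,5,9,3],[1,11,8,10],[2,4,6,7]],
    [[0,9,5,2],[1,3,11,6],[4,8,7,10]]] : List (List (List (Fin 12)))) rfl (by decide) (by decide)

lemma case_4_8 : HasOPSolution [4, 8] :=
  hasOP_of_data [4, 8] ([[[0,11,8,5,1,2,7,3],[4,6,10,9]],
    [[0,1,8,11,9,3,7,4],[2,6,5,10]],
    [[0,3,9,5,2,11,7,1],[4,8,10,6]],
    [[0,2,4,7,8,1,3,11],[5,6,9,10]],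
    [[0,6,7,5,3,8,9,2],[1,10,11,4]],
    [[0,4,10,8,6,1,5,7],[2,9,11,3]],
    [[0,8,3,10,7,9,1,6],[2,5,4,11]],
    [[0,5,8,7,10,3,4,9],[1,11,6,2]],
    [[0,7,2,8,4,5,11,10],[1,9,6,3]],
    [[0,10,1,4,2,3,6,8],[5,9,7,11]],
    [[0,9,8,2,10,4,3,5],[1,7,6,11]]] : List (List (List (Fin 12)))) rfl (by decide) (by decide)

lemma case_5_7 : HasOPSolution [5, 7] :=
  hasOP_of_data [5, 7] ([[[0,11,4,2,6,8,1],[3,10,5,7,9]],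
    [[0,4,6,10,9,8,3],[1,7,5,2,11]],
    [[0,3,8,5,6,9,11],[1,10,4,7,2]],
    [[0,10,8,4,9,2,5],[1,3,6,11,7]],
    [[0,6,3,1,11,9,7],[2,4,5,8,10]],
    [[0,7,6,4,1,9,10],[2,8,11,5,3]],
    [[0,8,7,3,5,1,6],[2,9,4,10,11]],
    [[0,1,5,4,11,3,9],[2,10,6,7,8]],
    [[0,2,3,7,10,1,4],[5,11,8,9,6]],
    [[0,9,5,10,3,4,8],[1,2,7,11,6]],
    [[0,5,9,1,8,6,2],[3,11,10,7,4]]] : List (List (List (Fin 12)))) rfl (by decide) (by decide)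

lemma case_6_6 : HasOPSolution [6, 6] :=
  hasOP_of_data [6, 6] ([[[0,8,1,9,2,5],[3,4,11,7,6,10]],
    [[0,1,5,2,11,6],[3,9,7,10,4,8]],
    [[0,6,1,4,2,10],[3,11,5,8,7,9]],
    [[0,3,6,4,9,8],[1,10,2,7,5,11]],
    [[0,11,3,1,6,7],[2,4,5,9,10,8]],
    [[0,9,11,2,8,4],[1,3,10,6,5,7]],
    [[0,2,6,9,4,1],[3,7,11,8,10,5]],
    [[0,5,1,7,2,3],[4,10,9,6,8,11]],
    [[0,10,11,9,1,2],[3,5,4,7,8,6]],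
    [[0,4,6,2,1,11],[3,8,9,5,10,7]],
    [[0,7,4,3,2,9],[1,8,5,6,11,10]]] : List (List (List (Fin 12)))) rfl (by decide) (by decide)

lemma case_12 : HasOPSolution [12] :=
  hasOP_of_data [12] ([[[0,11,3,6,8,2,1,10,5,4,9,7]],
    [[0,9,10,1,7,8,5,11,4,2,6,3]],
    [[0,1,2,5,9,3,4,11,8,10,7,6]],
    [[0,10,2,4,6,9,1,11,7,5,3,8]],
    [[0,5,1,4,7,9,8,3,11,10,6,2]],
    [[0,6,11,2,7,3,10,4,1,5,8,9]],
    [[0,4,3,9,6,1,8,7,2,10,11,5]],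
    [[0,2,8,6,5,10,3,7,11,1,9,4]],
    [[0,3,1,6,7,10,8,4,5,2,9,11]],
    [[0,7,4,8,1,3,2,11,9,5,6,10]],
    [[0,8,11,6,4,10,9,2,3,5,7,1]]] : List (List (List (Fin 12)))) rfl (by decide) (by decide)

lemma case_2_2_2_2_2_3 : HasOPSolution [2, 2, 2, 2, 2, 3] :=
  hasOP_of_data [2, 2, 2, 2, 2, 3] ([[[0,2,12],[1,8],[3,11],[4,6],[5,10],[7,9]],
    [[0,6,11],[1,7],[2,10],[3,4],[5,8],[9,12]],
    [[0,9,8],[1,12],[2,3],[4,5],[6,10],[7,11]],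
    [[0,11,6],[1,3],[2,8],[4,10],[5,9],[7,12]],
    [[0,7,5],[1,11],[2,6],[3,9],[4,8],[10,12]],
    [[0,3,10],[1,5],[2,4],[6,9],[7,8],[11,12]],
    [[0,8,9],[1,10],[2,11],[3,7],[4,12],[5,6]],
    [[0,4,1],[2,7],[3,8],[5,11],[6,12],[9,10]],
    [[0,10,3],[1,6],[2,9],[4,7],[5,12],[8,11]],
    [[0,12,2],[1,9],[3,5],[4,11],[6,7],[8,10]],
    [[0,5,7],[1,2],[3,12],[4,9],[6,8],[10,11]],
    [[0,1,4],[2,5],[3,6],[7,10],[8,12],[9,11]]] : List (List (List (Fin 13)))) rfl (by decide) (by decide)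

lemma case_2_2_2_2_5 : HasOPSolution [2, 2, 2, 2, 5] :=
  hasOP_of_data [2, 2, 2, 2, 5] ([[[0,1,12,7,6],[2,10],[3,5],[4,9],[8,11]],
    [[1,2,12,8,7],[3,11],[4,6],[5,10],[9,0]],
    [[2,3,12,9,8],[4,0],[5,7],[6,11],[10,1]],
    [[3,4,12,10,9],[5,1],[6,8],[7,0],[11,2]],
    [[4,5,12,11,10],[6,2],[7,9],[8,1],[0,3]],
    [[5,6,12,0,11],[7,3],[8,10],[9,2],[1,4]],
    [[6,7,12,1,0],[8,4],[9,11],[10,3],[2,5]],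
    [[7,8,12,2,1],[9,5],[10,0],[11,4],[3,6]],
    [[8,9,12,3,2],[10,6],[11,1],[0,5],[4,7]],
    [[9,10,12,4,3],[11,7],[0,2],[1,6],[5,8]],
    [[10,11,12,5,4],[0,8],[1,3],[2,7],[6,9]],
    [[11,0,12,6,5],[1,9],[2,4],[3,8],[7,10]]] : List (List (List (Fin 13)))) rfl (by decide) (by decide)

lemma case_2_2_2_3_4 : HasOPSolution [2, 2, 2, 3, 4] :=
  hasOP_of_data [2, 2, 2, 3, 4] ([[[0,8,6,12],[1,3,7],[2,5],[4,9],[10,11]],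
    [[1,9,7,12],[2,4,8],[3,6],[5,10],[11,0]],
    [[2,10,8,12],[3,5,9],[4,7],[6,11],[0,1]],
    [[3,11,9,12],[4,6,10],[5,8],[7,0],[1,2]],
    [[4,0,10,12],[5,7,11],[6,9],[8,1],[2,3]],
    [[5,1,11,12],[6,8,0],[7,10],[9,2],[3,4]],
    [[6,2,0,12],[7,9,1],[8,11],[10,3],[4,5]],
    [[7,3,1,12],[8,10,2],[9,0],[11,4],[5,6]],
    [[8,4,2,12],[9,11,3],[10,1],[0,5],[6,7]],
    [[9,5,3,12],[10,0,4],[11,2],[1,6],[7,8]],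
    [[10,6,4,12],[11,1,5],[0,3],[2,7],[8,9]],
    [[11,7,5,12],[0,2,6],[1,4],[3,8],[9,10]]] : List (List (List (Fin 13)))) rfl (by decide) (by decide)

lemma case_2_2_2_7 : HasOPSolution [2, 2, 2, 7] :=
  hasOP_of_data [2, 2, 2, 7] ([[[0,4,3,9,5,12,11],[1,10],[2,7],[6,8]],
    [[1,5,4,10,6,12,0],[2,11],[3,8],[7,9]],
    [[2,6,5,11,7,12,1],[3,0],[4,9],[8,10]],
    [[3,7,6,0,8,12,2],[4,1],[5,10],[9,11]],
    [[4,8,7,1,9,12,3],[5,2],[6,11],[10,0]],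
    [[5,9,8,2,10,12,4],[6,3],[7,0],[11,1]],
    [[6,10,9,3,11,12,5],[7,4],[8,1],[0,2]],
    [[7,11,10,4,0,12,6],[8,5],[9,2],[1,3]],
    [[8,0,11,5,1,12,7],[9,6],[10,3],[2,4]],
    [[9,1,0,6,2,12,8],[10,7],[11,4],[3,5]],
    [[10,2,1,7,3,12,9],[11,8],[0,5],[4,6]],
    [[11,3,2,8,4,12,10],[0,9],[1,6],[5,7]]] : List (List (List (Fin 13)))) rfl (by decide) (by decide)

lemma case_2_2_3_3_3 : HasOPSolution [2, 2, 3, 3, 3] :=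
  hasOP_of_data [2, 2, 3, 3, 3] ([[[0,4,1],[2,8,12],[3,6,7],[5,10],[9,11]],
    [[1,5,2],[3,9,12],[4,7,8],[6,11],[10,0]],
    [[2,6,3],[4,10,12],[5,8,9],[7,0],[11,1]],
    [[3,7,4],[5,11,12],[6,9,10],[8,1],[0,2]],
    [[4,8,5],[6,0,12],[7,10,11],[9,2],[1,3]],
    [[5,9,6],[7,1,12],[8,11,0],[10,3],[2,4]],
    [[6,10,7],[8,2,12],[9,0,1],[11,4],[3,5]],
    [[7,11,8],[9,3,12],[10,1,2],[0,5],[4,6]],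
    [[8,0,9],[10,4,12],[11,2,3],[1,6],[5,7]],
    [[9,1,10],[11,5,12],[0,3,4],[2,7],[6,8]],
    [[10,2,11],[0,6,12],[1,4,5],[3,8],[7,9]],
    [[11,3,0],[1,7,12],[2,5,6],[4,9],[8,10]]] : List (List (List (Fin 13)))) rfl (by decide) (by decide)

lemma case_2_2_3_6 : HasOPSolution [2, 2, 3, 6] :=
  hasOP_of_data [2, 2, 3, 6] ([[[0,8,1,5,12,11],[2,9,3],[4,6],[7,10]],
    [[1,9,2,6,12,0],[3,10,4],[5,7],[8,11]],
    [[2,10,3,7,12,1],[4,11,5],[6,8],[9,0]],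
    [[3,11,4,8,12,2],[5,0,6],[7,9],[10,1]],
    [[4,0,5,9,12,3],[6,1,7],[8,10],[11,2]],
    [[5,1,6,10,12,4],[7,2,8],[9,11],[0,3]],
    [[6,2,7,11,12,5],[8,3,9],[10,0],[1,4]],
    [[7,3,8,0,12,6],[9,4,10],[11,1],[2,5]],
    [[8,4,9,1,12,7],[10,5,11],[0,2],[3,6]],
    [[9,5,10,2,12,8],[11,6,0],[1,3],[4,7]],
    [[10,6,11,3,12,9],[0,7,1],[2,4],[5,8]],
    [[11,7,0,4,12,10],[1,8,2],[3,5],[6,9]]] : List (List (List (Fin 13)))) rfl (by decide) (by decide)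

lemma case_2_2_4_5 : HasOPSolution [2, 2, 4, 5] :=
  hasOP_of_data [2, 2, 4, 5] ([[[0,6,1,3,2],[4,9,10,12],[5,8],[7,11]],
    [[1,7,2,4,3],[5,10,11,12],[6,9],[8,0]],
    [[2,8,3,5,4],[6,11,0,12],[7,10],[9,1]],
    [[3,9,4,6,5],[7,0,1,12],[8,11],[10,2]],
    [[4,10,5,7,6],[8,1,2,12],[9,0],[11,3]],
    [[5,11,6,8,7],[9,2,3,12],[10,1],[0,4]],
    [[6,0,7,9,8],[10,3,4,12],[11,2],[1,5]],
    [[7,1,8,10,9],[11,4,5,12],[0,3],[2,6]],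
    [[8,2,9,11,10],[0,5,6,12],[1,4],[3,7]],
    [[9,3,10,0,11],[1,6,7,12],[2,5],[4,8]],
    [[10,4,11,1,0],[2,7,8,12],[3,6],[5,9]],
    [[11,5,0,2,1],[3,8,9,12],[4,7],[6,10]]] : List (List (List (Fin 13)))) rfl (by decide) (by decide)

lemma case_2_2_9 : HasOPSolution [2, 2, 9] :=
  hasOP_of_data [2, 2, 9] ([[[0,1,4,8,2,10,9,12,3],[5,7],[6,11]],
    [[1,2,5,9,3,11,10,12,4],[6,8],[7,0]],
    [[2,3,6,10,4,0,11,12,5],[7,9],[8,1]],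
    [[3,4,7,11,5,1,0,12,6],[8,10],[9,2]],
    [[4,5,8,0,6,2,1,12,7],[9,11],[10,3]],
    [[5,6,9,1,7,3,2,12,8],[10,0],[11,4]],
    [[6,7,10,2,8,4,3,12,9],[11,1],[0,5]],
    [[7,8,11,3,9,5,4,12,10],[0,2],[1,6]],
    [[8,9,0,4,10,6,5,12,11],[1,3],[2,7]],
    [[9,10,1,5,11,7,6,12,0],[2,4],[3,8]],
    [[10,11,2,6,0,8,7,12,1],[3,5],[4,9]],
    [[11,0,3,7,1,9,8,12,2],[4,6],[5,10]]] : List (List (List (Fin 13)))) rfl (by decide) (by decide)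

lemma case_2_3_3_5 : HasOPSolution [2, 3, 3, 5] :=
  hasOP_of_data [2, 3, 3, 5] ([[[0,7,12,1,9],[2,11,3],[4,5,10],[6,8]],
    [[1,8,12,2,10],[3,0,4],[5,6,11],[7,9]],
    [[2,9,12,3,11],[4,1,5],[6,7,0],[8,10]],
    [[3,10,12,4,0],[5,2,6],[7,8,1],[9,11]],
    [[4,11,12,5,1],[6,3,7],[8,9,2],[10,0]],
    [[5,0,12,6,2],[7,4,8],[9,10,3],[11,1]],
    [[6,1,12,7,3],[8,5,9],[10,11,4],[0,2]],
    [[7,2,12,8,4],[9,6,10],[11,0,5],[1,3]],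
    [[8,3,12,9,5],[10,7,11],[0,1,6],[2,4]],
    [[9,4,12,10,6],[11,8,0],[1,2,7],[3,5]],
    [[10,5,12,11,7],[0,9,1],[2,3,8],[4,6]],
    [[11,6,12,0,8],[1,10,2],[3,4,9],[5,7]]] : List (List (List (Fin 13)))) rfl (by decide) (by decide)

lemma case_2_3_4_4 : HasOPSolution [2, 3, 4, 4] :=
  hasOP_of_data [2, 3, 4, 4] ([[[0,9,10,6],[1,12,7,11],[2,5,4],[3,8]],
    [[1,10,11,7],[2,12,8,0],[3,6,5],[4,9]],
    [[2,11,0,8],[3,12,9,1],[4,7,6],[5,10]],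
    [[3,0,1,9],[4,12,10,2],[5,8,7],[6,11]],
    [[4,1,2,10],[5,12,11,3],[6,9,8],[7,0]],
    [[5,2,3,11],[6,12,0,4],[7,10,9],[8,1]],
    [[6,3,4,0],[7,12,1,5],[8,11,10],[9,2]],
    [[7,4,5,1],[8,12,2,6],[9,0,11],[10,3]],
    [[8,5,6,2],[9,12,3,7],[10,1,0],[11,4]],
    [[9,6,7,3],[10,12,4,8],[11,2,1],[0,5]],
    [[10,7,8,4],[11,12,5,9],[0,3,2],[1,6]],
    [[11,8,9,5],[0,12,6,10],[1,4,3],[2,7]]] : List (List (List (Fin 13)))) rfl (by decide) (by decide)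

lemma case_2_3_8 : HasOPSolution [2, 3, 8] :=
  hasOP_of_data [2, 3, 8] ([[[0,6,4,9,8,12,2,5],[1,10,11],[3,7]],
    [[1,7,5,10,9,12,3,6],[2,11,0],[4,8]],
    [[2,8,6,11,10,12,4,7],[3,0,1],[5,9]],
    [[3,9,7,0,11,12,5,8],[4,1,2],[6,10]],
    [[4,10,8,1,0,12,6,9],[5,2,3],[7,11]],
    [[5,11,9,2,1,12,7,10],[6,3,4],[8,0]],
    [[6,0,10,3,2,12,8,11],[7,4,5],[9,1]],
    [[7,1,11,4,3,12,9,0],[8,5,6],[10,2]],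
    [[8,2,0,5,4,12,10,1],[9,6,7],[11,3]],
    [[9,3,1,6,5,12,11,2],[10,7,8],[0,4]],
    [[10,4,2,7,6,12,0,3],[11,8,9],[1,5]],
    [[11,5,3,8,7,12,1,4],[0,9,10],[2,6]]] : List (List (List (Fin 13)))) rfl (by decide) (by decide)

lemma case_2_4_7 : HasOPSolution [2, 4, 7] :=
  hasOP_of_data [2, 4, 7] ([[[0,1,9,11,3,6,12],[2,8,7,4],[5,10]],
    [[1,2,10,0,4,7,12],[3,9,8,5],[6,11]],
    [[2,3,11,1,5,8,12],[4,10,9,6],[7,0]],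
    [[3,4,0,2,6,9,12],[5,11,10,7],[8,1]],
    [[4,5,1,3,7,10,12],[6,0,11,8],[9,2]],
    [[5,6,2,4,8,11,12],[7,1,0,9],[10,3]],
    [[6,7,3,5,9,0,12],[8,2,1,10],[11,4]],
    [[7,8,4,6,10,1,12],[9,3,2,11],[0,5]],
    [[8,9,5,7,11,2,12],[10,4,3,0],[1,6]],
    [[9,10,6,8,0,3,12],[11,5,4,1],[2,7]],
    [[10,11,7,9,1,4,12],[0,6,5,2],[3,8]],
    [[11,0,8,10,2,5,12],[1,7,6,3],[4,9]]] : List (List (List (Fin 13)))) rfl (by decide) (by decide)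

lemma case_2_5_6 : HasOPSolution [2, 5, 6] :=
  hasOP_of_data [2, 5, 6] ([[[0,6,3,7,5,1],[2,12,8,10,11],[4,9]],
    [[1,7,4,8,6,2],[3,12,9,11,0],[5,10]],
    [[2,8,5,9,7,3],[4,12,10,0,1],[6,11]],
    [[3,9,6,10,8,4],[5,12,11,1,2],[7,0]],
    [[4,10,7,11,9,5],[6,12,0,2,3],[8,1]],
    [[5,11,8,0,10,6],[7,12,1,3,4],[9,2]],
    [[6,0,9,1,11,7],[8,12,2,4,5],[10,3]],
    [[7,1,10,2,0,8],[9,12,3,5,6],[11,4]],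
    [[8,2,11,3,1,9],[10,12,4,6,7],[0,5]],
    [[9,3,0,4,2,10],[11,12,5,7,8],[1,6]],
    [[10,4,1,5,3,11],[0,12,6,8,9],[2,7]],
    [[11,5,2,6,4,0],[1,12,7,9,10],[3,8]]] : List (List (List (Fin 13)))) rfl (by decide) (by decide)

lemma case_2_11 : HasOPSolution [2, 11] :=
  hasOP_of_data [2, 11] ([[[0,4,3,12,9,11,2,10,7,5,6],[1,8]],
    [[1,5,4,12,10,0,3,11,8,6,7],[2,9]],
    [[2,6,5,12,11,1,4,0,9,7,8],[3,10]],
    [[3,7,6,12,0,2,5,1,10,8,9],[4,11]],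
    [[4,8,7,12,1,3,6,2,11,9,10],[5,0]],
    [[5,9,8,12,2,4,7,3,0,10,11],[6,1]],
    [[6,10,9,12,3,5,8,4,1,11,0],[7,2]],
    [[7,11,10,12,4,6,9,5,2,0,1],[8,3]],
    [[8,0,11,12,5,7,10,6,3,1,2],[9,4]],
    [[9,1,0,12,6,8,11,7,4,2,3],[10,5]],
    [[10,2,1,12,7,9,0,8,5,3,4],[11,6]],
    [[11,3,2,12,8,10,1,9,6,4,5],[0,7]]] : List (List (List (Fin 13)))) rfl (by decide) (by decide)

lemma case_3_3_3_4 : HasOPSolution [3, 3, 3, 4] :=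
  hasOP_of_data [3, 3, 3, 4] ([[[0,11,2,10],[1,12,7],[3,8,6],[4,5,9]],
    [[1,0,3,11],[2,12,8],[4,9,7],[5,6,10]],
    [[2,1,4,0],[3,12,9],[5,10,8],[6,7,11]],
    [[3,2,5,1],[4,12,10],[6,11,9],[7,8,0]],
    [[4,3,6,2],[5,12,11],[7,0,10],[8,9,1]],
    [[5,4,7,3],[6,12,0],[8,1,11],[9,10,2]],
    [[6,5,8,4],[7,12,1],[9,2,0],[10,11,3]],
    [[7,6,9,5],[8,12,2],[10,3,1],[11,0,4]],
    [[8,7,10,6],[9,12,3],[11,4,2],[0,1,5]],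
    [[9,8,11,7],[10,12,4],[0,5,3],[1,2,6]],
    [[10,9,0,8],[11,12,5],[1,6,4],[2,3,7]],
    [[11,10,1,9],[0,12,6],[2,7,5],[3,4,8]]] : List (List (List (Fin 13)))) rfl (by decide) (by decide)

lemma case_3_3_7 : HasOPSolution [3, 3, 7] :=
  hasOP_of_data [3, 3, 7] ([[[0,6,7,9,12,3,2],[1,10,5],[4,8,11]],
    [[1,7,8,10,12,4,3],[2,11,6],[5,9,0]],
    [[2,8,9,11,12,5,4],[3,0,7],[6,10,1]],
    [[3,9,10,0,12,6,5],[4,1,8],[7,11,2]],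
    [[4,10,11,1,12,7,6],[5,2,9],[8,0,3]],
    [[5,11,0,2,12,8,7],[6,3,10],[9,1,4]],
    [[6,0,1,3,12,9,8],[7,4,11],[10,2,5]],
    [[7,1,2,4,12,10,9],[8,5,0],[11,3,6]],
    [[8,2,3,5,12,11,10],[9,6,1],[0,4,7]],
    [[9,3,4,6,12,0,11],[10,7,2],[1,5,8]],
    [[10,4,5,7,12,1,0],[11,8,3],[2,6,9]],
    [[11,5,6,8,12,2,1],[0,9,4],[3,7,10]]] : List (List (List (Fin 13)))) rfl (by decide) (by decide)

lemma case_3_4_6 : HasOPSolution [3, 4, 6] :=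
  hasOP_of_data [3, 4, 6] ([[[0,12,6,3,11,5],[1,2,4,9],[7,10,8]],
    [[1,12,7,4,0,6],[2,3,5,10],[8,11,9]],
    [[2,12,8,5,1,7],[3,4,6,11],[9,0,10]],
    [[3,12,9,6,2,8],[4,5,7,0],[10,1,11]],
    [[4,12,10,7,3,9],[5,6,8,1],[11,2,0]],
    [[5,12,11,8,4,10],[6,7,9,2],[0,3,1]],
    [[6,12,0,9,5,11],[7,8,10,3],[1,4,2]],
    [[7,12,1,10,6,0],[8,9,11,4],[2,5,3]],
    [[8,12,2,11,7,1],[9,10,0,5],[3,6,4]],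
    [[9,12,3,0,8,2],[10,11,1,6],[4,7,5]],
    [[10,12,4,1,9,3],[11,0,2,7],[5,8,6]],
    [[11,12,5,2,10,4],[0,1,3,8],[6,9,7]]] : List (List (List (Fin 13)))) rfl (by decide) (by decide)

lemma case_3_5_5 : HasOPSolution [3, 5, 5] :=
  hasOP_of_data [3, 5, 5] ([[[0,3,11,1,6],[2,12,8,7,4],[5,9,10]],
    [[1,4,0,2,7],[3,12,9,8,5],[6,10,11]],
    [[2,5,1,3,8],[4,12,10,9,6],[7,11,0]],
    [[3,6,2,4,9],[5,12,11,10,7],[8,0,1]],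
    [[4,7,3,5,10],[6,12,0,11,8],[9,1,2]],
    [[5,8,4,6,11],[7,12,1,0,9],[10,2,3]],
    [[6,9,5,7,0],[8,12,2,1,10],[11,3,4]],
    [[7,10,6,8,1],[9,12,3,2,11],[0,4,5]],
    [[8,11,7,9,2],[10,12,4,3,0],[1,5,6]],
    [[9,0,8,10,3],[11,12,5,4,1],[2,6,7]],
    [[10,1,9,11,4],[0,12,6,5,2],[3,7,8]],
    [[11,2,10,0,5],[1,12,7,6,3],[4,8,9]]] : List (List (List (Fin 13)))) rfl (by decide) (by decide)

lemma case_3_10 : HasOPSolution [3, 10] :=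
  hasOP_of_data [3, 10] ([[[0,7,4,10,11,12,5,3,6,8],[1,9,2]],
    [[1,8,5,11,0,12,6,4,7,9],[2,10,3]],
    [[2,9,6,0,1,12,7,5,8,10],[3,11,4]],
    [[3,10,7,1,2,12,8,6,9,11],[4,0,5]],
    [[4,11,8,2,3,12,9,7,10,0],[5,1,6]],
    [[5,0,9,3,4,12,10,8,11,1],[6,2,7]],
    [[6,1,10,4,5,12,11,9,0,2],[7,3,8]],
    [[7,2,11,5,6,12,0,10,1,3],[8,4,9]],
    [[8,3,0,6,7,12,1,11,2,4],[9,5,10]],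
    [[9,4,1,7,8,12,2,0,3,5],[10,6,11]],
    [[10,5,2,8,9,12,3,1,4,6],[11,7,0]],
    [[11,6,3,9,10,12,4,2,5,7],[0,8,1]]] : List (List (List (Fin 13)))) rfl (by decide) (by decide)

lemma case_4_4_5 : HasOPSolution [4, 4, 5] :=
  hasOP_of_data [4, 4, 5] ([[[0,12,6,10,7],[1,9,8,3],[2,4,5,11]],
    [[1,12,7,11,8],[2,10,9,4],[3,5,6,0]],
    [[2,12,8,0,9],[3,11,10,5],[4,6,7,1]],
    [[3,12,9,1,10],[4,0,11,6],[5,7,8,2]],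
    [[4,12,10,2,11],[5,1,0,7],[6,8,9,3]],
    [[5,12,11,3,0],[6,2,1,8],[7,9,10,4]],
    [[6,12,0,4,1],[7,3,2,9],[8,10,11,5]],
    [[7,12,1,5,2],[8,4,3,10],[9,11,0,6]],
    [[8,12,2,6,3],[9,5,4,11],[10,0,1,7]],
    [[9,12,3,7,4],[10,6,5,0],[11,1,2,8]],
    [[10,12,4,8,5],[11,7,6,1],[0,2,3,9]],
    [[11,12,5,9,6],[0,8,7,2],[1,3,4,10]]] : List (List (List (Fin 13)))) rfl (by decide) (by decide)

lemma case_4_9 : HasOPSolution [4, 9] :=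
  hasOP_of_data [4, 9] ([[[0,10,11,6,2,12,8,5,7],[1,4,3,9]],
    [[1,11,0,7,3,12,9,6,8],[2,5,4,10]],
    [[2,0,1,8,4,12,10,7,9],[3,6,5,11]],
    [[3,1,2,9,5,12,11,8,10],[4,7,6,0]],
    [[4,2,3,10,6,12,0,9,11],[5,8,7,1]],
    [[5,3,4,11,7,12,1,10,0],[6,9,8,2]],
    [[6,4,5,0,8,12,2,11,1],[7,10,9,3]],
    [[7,5,6,1,9,12,3,0,2],[8,11,10,4]],
    [[8,6,7,2,10,12,4,1,3],[9,0,11,5]],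
    [[9,7,8,3,11,12,5,2,4],[10,1,0,6]],
    [[10,8,9,4,0,12,6,3,5],[11,2,1,7]],
    [[11,9,10,5,1,12,7,4,6],[0,3,2,8]]] : List (List (List (Fin 13)))) rfl (by decide) (by decide)

lemma case_5_8 : HasOPSolution [5, 8] :=
  hasOP_of_data [5, 8] ([[[0,12,6,7,4,10,2,5],[1,3,11,9,8]],
    [[1,12,7,8,5,11,3,6],[2,4,0,10,9]],
    [[2,12,8,9,6,0,4,7],[3,5,1,11,10]],
    [[3,12,9,10,7,1,5,8],[4,6,2,0,11]],
    [[4,12,10,11,8,2,6,9],[5,7,3,1,0]],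
    [[5,12,11,0,9,3,7,10],[6,8,4,2,1]],
    [[6,12,0,1,10,4,8,11],[7,9,5,3,2]],
    [[7,12,1,2,11,5,9,0],[8,10,6,4,3]],
    [[8,12,2,3,0,6,10,1],[9,11,7,5,4]],
    [[9,12,3,4,1,7,11,2],[10,0,8,6,5]],
    [[10,12,4,5,2,8,0,3],[11,1,9,7,6]],
    [[11,12,5,6,3,9,1,4],[0,2,10,8,7]]] : List (List (List (Fin 13)))) rfl (by decide) (by decide)

lemma case_6_7 : HasOPSolution [6, 7] :=
  hasOP_of_data [6, 7] ([[[0,1,4,12,10,9,7],[2,6,8,3,11,5]],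
    [[1,2,5,12,11,10,8],[3,7,9,4,0,6]],
    [[2,3,6,12,0,11,9],[4,8,10,5,1,7]],
    [[3,4,7,12,1,0,10],[5,9,11,6,2,8]],
    [[4,5,8,12,2,1,11],[6,10,0,7,3,9]],
    [[5,6,9,12,3,2,0],[7,11,1,8,4,10]],
    [[6,7,10,12,4,3,1],[8,0,2,9,5,11]],
    [[7,8,11,12,5,4,2],[9,1,3,10,6,0]],
    [[8,9,0,12,6,5,3],[10,2,4,11,7,1]],
    [[9,10,1,12,7,6,4],[11,3,5,0,8,2]],
    [[10,11,2,12,8,7,5],[0,4,6,1,9,3]],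
    [[11,0,3,12,9,8,6],[1,5,7,2,10,4]]] : List (List (List (Fin 13)))) rfl (by decide) (by decide)

lemma case_13 : HasOPSolution [13] :=
  hasOP_of_data [13] ([[[0,3,8,10,2,9,6,4,5,12,11,7,1]],
    [[1,4,9,11,3,10,7,5,6,12,0,8,2]],
    [[2,5,10,0,4,11,8,6,7,12,1,9,3]],
    [[3,6,11,1,5,0,9,7,8,12,2,10,4]],
    [[4,7,0,2,6,1,10,8,9,12,3,11,5]],
    [[5,8,1,3,7,2,11,9,10,12,4,0,6]],
    [[6,9,2,4,8,3,0,10,11,12,5,1,7]],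
    [[7,10,3,5,9,4,1,11,0,12,6,2,8]],
    [[8,11,4,6,10,5,2,0,1,12,7,3,9]],
    [[9,0,5,7,11,6,3,1,2,12,8,4,10]],
    [[10,1,6,8,0,7,4,2,3,12,9,5,11]],
    [[11,2,7,9,1,8,5,3,4,12,10,6,0]]] : List (List (List (Fin 13)))) rfl (by decide) (by decide)

/-- Theorem (small cases): for 2 ≤ m₁ ≤ … ≤ m_k with m₁ + … + m_k ≤ 13,
OP*(m₁,…,m_k) has a solution iff (m₁,…,m_k) ∉ {(4), (6), (3,3)}. -/
theorem stmt3 (m : List ℕ) (hne : m ≠ [])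
    (h2 : ∀ x ∈ m, 2 ≤ x) (hsorted : m.Pairwise (· ≤ ·)) (hsum : m.sum ≤ 13) :
    HasOPSolution m ↔ (m ≠ [4] ∧ m ≠ [6] ∧ m ≠ [3, 3]) := by
  have hmem : m ∈ enumL 13 13 2 :=
    mem_enumL 13 13 2 m h2 hsorted
      (fun x hx => le_trans (by norm_num) (h2 x hx)) hsum (le_refl _)
  have hlit : enumL 13 13 2 = [[], [2], [2, 2], [2, 2, 2], [2, 2, 2, 2], [2, 2, 2, 2, 2], [2, 2, 2, 2, 2, 2], [2, 2, 2, 2, 2, 3], [2, 2, 2, 2, 3], [2, 2, 2, 2, 4], [2, 2, 2, 2, 5], [2, 2, 2, 3], [2, 2, 2, 3, 3], [2, 2, 2, 3, 4], [2, 2, 2, 4], [2, 2, 2, 5], [2, 2, 2, 6], [2, 2, 2, 7], [2, 2, 3], [2, 2, 3, 3], [2, 2, 3, 3, 3], [2, 2, 3, 4], [2, 2, 3, 5], [2, 2, 3, 6], [2, 2, 4], [2, 2, 4, 4], [2, 2, 4, 5], [2, 2, 5], [2, 2, 6], [2, 2, 7], [2, 2, 8], [2, 2, 9], [2, 3], [2,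 3, 3], [2, 3, 3, 3], [2, 3, 3, 4], [2, 3, 3, 5], [2, 3, 4], [2, 3, 4, 4], [2, 3, 5], [2, 3, 6], [2, 3, 7], [2, 3, 8], [2, 4], [2, 4, 4], [2, 4, 5], [2, 4, 6], [2, 4, 7], [2, 5], [2, 5, 5], [2, 5, 6], [2, 6], [2, 7], [2, 8], [2, 9], [2, 10], [2, 11], [3], [3, 3], [3, 3, 3], [3, 3, 3, 3], [3, 3, 3, 4], [3, 3, 4], [3, 3, 5], [3, 3, 6], [3, 3, 7], [3, 4], [3, 4, 4], [3, 4, 5], [3, 4, 6], [3, 5], [3, 5, 5], [3, 6], [3, 7], [3, 8], [3, 9], [3, 10], [4], [4, 4], [4, 4, 4], [4, 4, 5], [4, 5], [4, 6], [4, 7], [4, 8], [4, 9], [5], [5, 5], [5, 6], [5, 7], [5, 8], [6], [6, 6], [6, 7], [7], [8], [9], [10], [11], [12], [13]] := by decide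
  rw [hlit] at hmem
  fin_cases hmem
  · exact absurd rfl hne
  · exact iff_of_true case_2 (by decide)
  · exact iff_of_true case_2_2 (by decide)
  · exact iff_of_true case_2_2_2 (by decide)
  · exact iff_of_true case_2_2_2_2 (by decide)
  · exact iff_of_true case_2_2_2_2_2 (by decide)
  · exact iff_of_true case_2_2_2_2_2_2 (by decide)
  · exact iff_of_true case_2_2_2_2_2_3 (by decide)
  · exact iff_of_true case_2_2_2_2_3 (by decide)
  · exact iff_of_true case_2_2_2_2_4 (by decide)
  · exact iff_of_true case_2_2_2_2_5 (by decide)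
  · exact iff_of_true case_2_2_2_3 (by decide)
  · exact iff_of_true case_2_2_2_3_3 (by decide)
  · exact iff_of_true case_2_2_2_3_4 (by decide)
  · exact iff_of_true case_2_2_2_4 (by decide)
  · exact iff_of_true case_2_2_2_5 (by decide)
  · exact iff_of_true case_2_2_2_6 (by decide)
  · exact iff_of_true case_2_2_2_7 (by decide)
  · exact iff_of_true case_2_2_3 (by decide)
  · exact iff_of_true case_2_2_3_3 (by decide)
  · exact iff_of_true case_2_2_3_3_3 (by decide)
  · exact iff_of_true case_2_2_3_4 (by decide)
  · exact iff_of_true case_2_2_3_5 (by decide)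
  · exact iff_of_true case_2_2_3_6 (by decide)
  · exact iff_of_true case_2_2_4 (by decide)
  · exact iff_of_true case_2_2_4_4 (by decide)
  · exact iff_of_true case_2_2_4_5 (by decide)
  · exact iff_of_true case_2_2_5 (by decide)
  · exact iff_of_true case_2_2_6 (by decide)
  · exact iff_of_true case_2_2_7 (by decide)
  · exact iff_of_true case_2_2_8 (by decide)
  · exact iff_of_true case_2_2_9 (by decide)
  · exact iff_of_true case_2_3 (by decide)
  · exact iff_of_true case_2_3_3 (by decide)
  · exact iff_of_true case_2_3_3_3 (by decide)
  · exact iff_of_true case_2_3_3_4 (by decide)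
  · exact iff_of_true case_2_3_3_5 (by decide)
  · exact iff_of_true case_2_3_4 (by decide)
  · exact iff_of_true case_2_3_4_4 (by decide)
  · exact iff_of_true case_2_3_5 (by decide)
  · exact iff_of_true case_2_3_6 (by decide)
  · exact iff_of_true case_2_3_7 (by decide)
  · exact iff_of_true case_2_3_8 (by decide)
  · exact iff_of_true case_2_4 (by decide)
  · exact iff_of_true case_2_4_4 (by decide)
  · exact iff_of_true case_2_4_5 (by decide)
  · exact iff_of_true case_2_4_6 (by decide)
  · exact iff_of_true case_2_4_7 (by decide)
  · exact iff_of_true case_2_5 (by decide)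
  · exact iff_of_true case_2_5_5 (by decide)
  · exact iff_of_true case_2_5_6 (by decide)
  · exact iff_of_true case_2_6 (by decide)
  · exact iff_of_true case_2_7 (by decide)
  · exact iff_of_true case_2_8 (by decide)
  · exact iff_of_true case_2_9 (by decide)
  · exact iff_of_true case_2_10 (by decide)
  · exact iff_of_true case_2_11 (by decide)
  · exact iff_of_true case_3 (by decide)
  · exact iff_of_false no33 (by simp)
  · exact iff_of_true case_3_3_3 (by decide)
  · exact iff_of_true case_3_3_3_3 (by decide)
  · exact iff_of_true case_3_3_3_4 (by decide)
  · exact iff_of_true case_3_3_4 (by decide)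
  · exact iff_of_true case_3_3_5 (by decide)
  · exact iff_of_true case_3_3_6 (by decide)
  · exact iff_of_true case_3_3_7 (by decide)
  · exact iff_of_true case_3_4 (by decide)
  · exact iff_of_true case_3_4_4 (by decide)
  · exact iff_of_true case_3_4_5 (by decide)
  · exact iff_of_true case_3_4_6 (by decide)
  · exact iff_of_true case_3_5 (by decide)
  · exact iff_of_true case_3_5_5 (by decide)
  · exact iff_of_true case_3_6 (by decide)
  · exact iff_of_true case_3_7 (by decide)
  · exact iff_of_true case_3_8 (by decide)
  · exact iff_of_true case_3_9 (by decide)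
  · exact iff_of_true case_3_10 (by decide)
  · exact iff_of_false no4 (by simp)
  · exact iff_of_true case_4_4 (by decide)
  · exact iff_of_true case_4_4_4 (by decide)
  · exact iff_of_true case_4_4_5 (by decide)
  · exact iff_of_true case_4_5 (by decide)
  · exact iff_of_true case_4_6 (by decide)
  · exact iff_of_true case_4_7 (by decide)
  · exact iff_of_true case_4_8 (by decide)
  · exact iff_of_true case_4_9 (by decide)
  · exact iff_of_true case_5 (by decide)
  · exact iff_of_true case_5_5 (by decide)
  · exact iff_of_true case_5_6 (by decide)
  · exact iff_of_true case_5_7 (by decide)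
  · exact iff_of_true case_5_8 (by decide)
  · exact iff_of_false no6 (by simp)
  · exact iff_of_true case_6_6 (by decide)
  · exact iff_of_true case_6_7 (by decide)
  · exact iff_of_true case_7 (by decide)
  · exact iff_of_true case_8 (by decide)
  · exact iff_of_true case_9 (by decide)
  · exact iff_of_true case_10 (by decide)
  · exact iff_of_true case_11 (by decide)
  · exact iff_of_true case_12 (by decide)
  · exact iff_of_true case_13 (by decide)
end

section
/- Let m_1, …, m_k be integers with each m_i ≥ 2 and n = m_1 + … + m_k, and let q be a positive divisor of n−1. Suppose there exist (C_{m_1}, …, C_{m_k})-factors F_0, F_1, …, F_{q−1} on the vertex set Z_{n−1} ∪ {∞} which jointly contain exactly one arc of each base-q difference in the set {d_r : d ∈ (Z_{n−1} \ {0}) ∪ {∞, −∞}, r ∈ Z_q}; that is, for every such pair (d, r) there is exactly one pair (j, x) with 0 ≤ j ≤ q−1 for which the arc (x, F_j(x)) has base-q difference d_r. Then OP*(m_1, …, m_k) has a solution. -/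
lemma exu_rot (N q : ℕ) (hq : 0 < q) (hqd : q ∣ N) [NeZero N] (z x : ZMod N)
    (h : ZMod.castHom hqd (ZMod q) z = ZMod.castHom hqd (ZMod q) x) :
    ∃! t : Fin (N / q), z + ((q * (t : ℕ) : ℕ) : ZMod N) = x := by
  haveI : NeZero q := ⟨hq.ne'⟩
  have hN : 0 < N := Nat.pos_of_ne_zero (NeZero.ne N)
  have hNq : q * (N / q) = N := Nat.mul_div_cancel' hqd
  have hcastval : ∀ y : ZMod N, ZMod.castHom hqd (ZMod q) y = ((y.val : ℕ) : ZMod q) := by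
    intro y
    conv_lhs => rw [← ZMod.natCast_rightInverse y]
    rw [map_natCast]
  have h0 : ZMod.castHom hqd (ZMod q) (x - z) = 0 := by rw [map_sub, h, sub_self]
  rw [hcastval] at h0
  obtain ⟨k, hk⟩ := (ZMod.natCast_eq_zero_iff _ _).mp h0
  have hvlt : (x - z).val < N := ZMod.val_lt _
  have hklt : k < N / q := by
    by_contra hc
    push_neg at hc
    have : N ≤ q * k := by calc N = q * (N / q) := hNq.symm
                                _ ≤ q * k := Nat.mul_le_mul_left q hc
    omega
  -- injectivity of t ↦ (q*t : ZMod N) on Fin (N/q)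
  have hinj : ∀ t : Fin (N / q), ((q * (t : ℕ) : ℕ) : ZMod N) = ((q * k : ℕ) : ZMod N) → (t : ℕ) = k := by
    intro t ht
    have h1 : q * (t : ℕ) < N := by
      calc q * (t : ℕ) < q * (N / q) := (Nat.mul_lt_mul_left hq).mpr t.isLt
        _ = N := hNq
    have h2 : q * k < N := by rw [← hk]; exact hvlt
    have := ZMod.val_cast_of_lt h1
    have := ZMod.val_cast_of_lt h2
    have : q * (t : ℕ) = q * k := by
      rw [← ZMod.val_cast_of_lt h1, ← ZMod.val_cast_of_lt h2, ht]
    exact Nat.eq_of_mul_eq_mul_left hq this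
  refine ⟨⟨k, hklt⟩, ?_, ?_⟩
  · show z + ((q * k : ℕ) : ZMod N) = x
    rw [← hk, ZMod.natCast_rightInverse]
    ring
  · intro t ht
    have : ((q * (t : ℕ) : ℕ) : ZMod N) = ((q * k : ℕ) : ZMod N) := by
      have h1 : ((q * (t : ℕ) : ℕ) : ZMod N) = x - z := by rw [← ht]; ring
      rw [h1, ← hk, ZMod.natCast_rightInverse]
    exact Fin.ext (hinj t this)

def rotPerm (N : ℕ) (c : ZMod N) : Equiv.Perm (Option (ZMod N)) :=
  Equiv.optionCongr (Equiv.addRight c)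

lemma rotPerm_apply (N : ℕ) (c : ZMod N) (x : Option (ZMod N)) :
    rotPerm N c x = Option.map (· + c) x := by
  cases x <;> simp [rotPerm]

lemma rotPerm_inv_apply (N : ℕ) (c : ZMod N) (x : Option (ZMod N)) :
    (rotPerm N c)⁻¹ x = Option.map (· - c) x := by
  cases x <;> simp [rotPerm, Equiv.Perm.inv_def, sub_eq_add_neg, ← Equiv.optionCongr_symm]

lemma core (N q : ℕ) (hq : 0 < q) (hqd : q ∣ N) [NeZero N]
    (F : Fin q → Equiv.Perm (Option (ZMod N)))
    (hfin : ∀ d : ZMod N, d ≠ 0 → ∀ r : ZMod q,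
      ∃! p : Fin q × ZMod N,
        (F p.1) (some p.2) = some (p.2 + d) ∧ ZMod.castHom hqd (ZMod q) p.2 = r)
    (hinf : ∀ r : ZMod q,
      ∃! p : Fin q × ZMod N,
        (F p.1) (some p.2) = none ∧ ZMod.castHom hqd (ZMod q) p.2 = r)
    (hninf : ∀ r : ZMod q,
      ∃! p : Fin q × ZMod N,
        (F p.1) none = some p.2 ∧ ZMod.castHom hqd (ZMod q) p.2 = r)
    (x y : Option (ZMod N)) (hxy : x ≠ y) :
    ∃! p : Fin q × Fin (N / q),
      (rotPerm N ((q * (p.2 : ℕ) : ℕ) : ZMod N) * F p.1 *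
        (rotPerm N ((q * (p.2 : ℕ) : ℕ) : ZMod N))⁻¹) x = y := by
  have hc0 : ∀ t : Fin (N / q),
      ZMod.castHom hqd (ZMod q) ((q * (t : ℕ) : ℕ) : ZMod N) = 0 := by
    intro t; rw [map_natCast]; push_cast; simp
  have hG : ∀ (j : Fin q) (t : Fin (N / q)) (x : Option (ZMod N)),
      (rotPerm N ((q * (t : ℕ) : ℕ) : ZMod N) * F j *
        (rotPerm N ((q * (t : ℕ) : ℕ) : ZMod N))⁻¹) x
      = Option.map (· + ((q * (t : ℕ) : ℕ) : ZMod N))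
          (F j (Option.map (· - ((q * (t : ℕ) : ℕ) : ZMod N)) x)) := by
    intro j t x
    simp [Equiv.Perm.mul_apply, rotPerm_apply, rotPerm_inv_apply]
  rcases x with _ | a <;> rcases y with _ | b
  · exact absurd rfl hxy
  -- x = none, y = some b
  · obtain ⟨⟨j₀, z₀⟩, ⟨hF₀, hr₀⟩, huniq⟩ := hninf (ZMod.castHom hqd (ZMod q) b)
    obtain ⟨t₀, ht₀, htu⟩ := exu_rot N q hq hqd z₀ b hr₀
    refine ⟨(j₀, t₀), ?_, ?_⟩
    · beta_reduce
      rw [hG]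
      simp only [Option.map_none, hF₀, Option.map_some]
      exact congrArg some ht₀
    · rintro ⟨j, t⟩ hjt
      rw [hG] at hjt
      simp only [Option.map_none] at hjt
      rcases hFv : F j none with _ | w
      · rw [hFv] at hjt; simp at hjt
      · rw [hFv] at hjt
        simp only [Option.map_some, Option.some.injEq] at hjt
        have hw : w = b - ((q * (t : ℕ) : ℕ) : ZMod N) := by rw [← hjt]; ring
        have hpred : (F j) none = some (b - ((q * (t : ℕ) : ℕ) : ZMod N)) ∧
            ZMod.castHom hqd (ZMod q) (b - ((q * (t : ℕ) : ℕ) : ZMod N))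
            = ZMod.castHom hqd (ZMod q) b := by
          refine ⟨by rw [hFv, hw], by rw [map_sub, hc0]; ring⟩
        have heq := huniq (j, b - ((q * (t : ℕ) : ℕ) : ZMod N)) hpred
        have hj : j = j₀ := congrArg Prod.fst heq
        have hz : b - ((q * (t : ℕ) : ℕ) : ZMod N) = z₀ := congrArg Prod.snd heq
        have ht : t = t₀ := htu t (by rw [← hz]; ring)
        rw [hj, ht]
  -- x = some a, y = none
  · obtain ⟨⟨j₀, z₀⟩, ⟨hF₀, hr₀⟩, huniq⟩ := hinf (ZMod.castHom hqd (ZMod q) a)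
    obtain ⟨t₀, ht₀, htu⟩ := exu_rot N q hq hqd z₀ a hr₀
    have hz₀ : a - ((q * (t₀ : ℕ) : ℕ) : ZMod N) = z₀ := by rw [← ht₀]; ring
    refine ⟨(j₀, t₀), ?_, ?_⟩
    · beta_reduce
      rw [hG]
      simp only [Option.map_some, hz₀, hF₀, Option.map_none]
    · rintro ⟨j, t⟩ hjt
      rw [hG] at hjt
      simp only [Option.map_some] at hjt
      rcases hFv : F j (some (a - ((q * (t : ℕ) : ℕ) : ZMod N))) with _ | w
      · have hpred : (F j) (some (a - ((q * (t : ℕ) : ℕ) : ZMod N))) = none ∧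
            ZMod.castHom hqd (ZMod q) (a - ((q * (t : ℕ) : ℕ) : ZMod N))
            = ZMod.castHom hqd (ZMod q) a := ⟨hFv, by rw [map_sub, hc0]; ring⟩
        have heq := huniq (j, a - ((q * (t : ℕ) : ℕ) : ZMod N)) hpred
        have hj : j = j₀ := congrArg Prod.fst heq
        have hz : a - ((q * (t : ℕ) : ℕ) : ZMod N) = z₀ := congrArg Prod.snd heq
        have ht : t = t₀ := htu t (by rw [← hz]; ring)
        rw [hj, ht]
      · rw [hFv] at hjt; simp at hjt
  -- x = some a, y = some b
  · have hab : a ≠ b := fun h => hxy (by rw [h])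
    have hd : b - a ≠ 0 := sub_ne_zero.mpr (Ne.symm hab)
    obtain ⟨⟨j₀, z₀⟩, ⟨hF₀, hr₀⟩, huniq⟩ := hfin (b - a) hd (ZMod.castHom hqd (ZMod q) a)
    obtain ⟨t₀, ht₀, htu⟩ := exu_rot N q hq hqd z₀ a hr₀
    have hz₀ : a - ((q * (t₀ : ℕ) : ℕ) : ZMod N) = z₀ := by rw [← ht₀]; ring
    refine ⟨(j₀, t₀), ?_, ?_⟩
    · beta_reduce
      rw [hG]
      simp only [Option.map_some, hz₀, hF₀]
      refine congrArg some ?_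
      rw [← ht₀]; ring
    · rintro ⟨j, t⟩ hjt
      rw [hG] at hjt
      simp only [Option.map_some] at hjt
      rcases hFv : F j (some (a - ((q * (t : ℕ) : ℕ) : ZMod N))) with _ | w
      · rw [hFv] at hjt; simp at hjt
      · rw [hFv] at hjt
        simp only [Option.map_some, Option.some.injEq] at hjt
        have hw : w = (a - ((q * (t : ℕ) : ℕ) : ZMod N)) + (b - a) := by rw [← hjt]; ring
        have hpred : (F j) (some (a - ((q * (t : ℕ) : ℕ) : ZMod N)))
            = some ((a - ((q * (t : ℕ) : ℕ) : ZMod N)) + (b - a)) ∧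
            ZMod.castHom hqd (ZMod q) (a - ((q * (t : ℕ) : ℕ) : ZMod N))
            = ZMod.castHom hqd (ZMod q) a := by
          refine ⟨by rw [hFv, hw], by rw [map_sub, hc0]; ring⟩
        have heq := huniq (j, a - ((q * (t : ℕ) : ℕ) : ZMod N)) hpred
        have hj : j = j₀ := congrArg Prod.fst heq
        have hz : a - ((q * (t : ℕ) : ℕ) : ZMod N) = z₀ := congrArg Prod.snd heq
        have ht : t = t₀ := htu t (by rw [← hz]; ring)
        rw [hj, ht]

/-- Lemma (base-q 1-rotational construction). The vertex set of K_n^* is identified with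
Z_{n−1} ∪ {∞}, encoded as `Option (ZMod (n−1))` with `none` playing the role of ∞.
If there are (C_{m₁},…,C_{m_k})-factors F₀,…,F_{q−1} (fixed-point-free permutations
with cycle type {m₁,…,m_k}) jointly containing exactly one arc of each base-q difference
d_r (for d ∈ Z_{n−1} \ {0} and r ∈ Z_q), exactly one arc of each difference ∞_r, and
exactly one arc of each difference (−∞)_r, then OP*(m₁,…,m_k) has a solution. -/
theorem stmt12 (m : List ℕ) (hne : m ≠ []) (h2 : ∀ x ∈ m, 2 ≤ x)
    (q : ℕ) (hq : 0 < q) (hqd : q ∣ (m.sum - 1)) [NeZero (m.sum - 1)]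
    (F : Fin q → Equiv.Perm (Option (ZMod (m.sum - 1))))
    (hfpf : ∀ j x, F j x ≠ x)
    (hcyc : ∀ j, (F j).cycleType = (m : Multiset ℕ))
    (hfin : ∀ d : ZMod (m.sum - 1), d ≠ 0 → ∀ r : ZMod q,
      ∃! p : Fin q × ZMod (m.sum - 1),
        (F p.1) (some p.2) = some (p.2 + d) ∧ ZMod.castHom hqd (ZMod q) p.2 = r)
    (hinf : ∀ r : ZMod q,
      ∃! p : Fin q × ZMod (m.sum - 1),
        (F p.1) (some p.2) = none ∧ ZMod.castHom hqd (ZMod q) p.2 = r)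
    (hninf : ∀ r : ZMod q,
      ∃! p : Fin q × ZMod (m.sum - 1),
        (F p.1) none = some p.2 ∧ ZMod.castHom hqd (ZMod q) p.2 = r) :
    HasOPSolution m := by
  classical
  have hn2 : 2 ≤ m.sum := by
    obtain ⟨a, l, rfl⟩ := List.exists_cons_of_ne_nil hne
    have := h2 a (by simp)
    simp only [List.sum_cons]
    omega
  have hNn : (m.sum - 1) + 1 = m.sum := by omega
  -- identification of the vertex set with Fin m.sum
  let e : Option (ZMod (m.sum - 1)) ≃ Fin m.sum :=
    Fintype.equivFinOfCardEq (by simp [ZMod.card]; omega)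
  let f : Option (ZMod (m.sum - 1)) ≃ {x : Fin m.sum // True} :=
    e.trans (Equiv.subtypeUnivEquiv (fun _ => trivial)).symm
  have hemb : ∀ (g : Equiv.Perm (Option (ZMod (m.sum - 1)))) x,
      g.extendDomain f (e x) = e (g x) := by
    intro g x
    have h1 := Equiv.Perm.extendDomain_apply_subtype g f (b := e x) trivial
    simp only [f, Equiv.trans_apply, Equiv.symm_trans_apply, Equiv.symm_symm,
      Equiv.subtypeUnivEquiv] at h1 ⊢
    simpa using h1
  have hct : ∀ (g : Equiv.Perm (Option (ZMod (m.sum - 1)))),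
      (g.extendDomain f).cycleType = g.cycleType :=
    fun g => Equiv.Perm.cycleType_extendDomain f
  -- indexing
  have hNq : q * ((m.sum - 1) / q) = m.sum - 1 := Nat.mul_div_cancel' hqd
  let E : Fin q × Fin ((m.sum - 1) / q) ≃ Fin (m.sum - 1) :=
    finProdFinEquiv.trans (finCongr hNq)
  let G : Fin q × Fin ((m.sum - 1) / q) → Equiv.Perm (Option (ZMod (m.sum - 1))) :=
    fun p => rotPerm (m.sum - 1) ((q * (p.2 : ℕ) : ℕ) : ZMod (m.sum - 1)) * F p.1 *
      (rotPerm (m.sum - 1) ((q * (p.2 : ℕ) : ℕ) : ZMod (m.sum - 1)))⁻¹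
  refine ⟨fun i => (G (E.symm i)).extendDomain f, ?_, ?_⟩
  · intro i
    rw [hct]
    show (rotPerm _ _ * F _ * (rotPerm _ _)⁻¹).cycleType = _
    rw [Equiv.Perm.cycleType_conj]
    exact hcyc _
  · intro x y hxy
    have hxy' : e.symm x ≠ e.symm y := fun h => hxy (by
      have := congrArg e h; simpa using this)
    obtain ⟨p₀, hp₀, hpu⟩ :=
      core (m.sum - 1) q hq hqd F hfin hinf hninf (e.symm x) (e.symm y) hxy'
    refine ⟨E p₀, ?_, ?_⟩
    · show (G (E.symm (E p₀))).extendDomain f x = y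
      rw [E.symm_apply_apply]
      have h1 := hemb (G p₀) (e.symm x)
      rw [e.apply_symm_apply] at h1
      rw [h1, hp₀, e.apply_symm_apply]
    · intro i hi
      have h1 := hemb (G (E.symm i)) (e.symm x)
      rw [e.apply_symm_apply] at h1
      have h2 : G (E.symm i) (e.symm x) = e.symm y := by
        apply e.injective
        rw [← h1, hi, e.apply_symm_apply]
      have h3 := hpu (E.symm i) h2
      rw [← h3, E.apply_symm_apply]
end
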